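/- arXiv:1107.2080 — 8 statements merged into one kernel-verified Lean document; each statement's English description precedes it below -/
import Mathlib

section
/- Let F be a one-dimensional cellular automaton over a finite alphabet S with radius r ≥ 1, and let m ≥ r. Then the following are equivalent: (1) F has an m-blocking word; (2) there exist a word u over S with |u| ≥ m and an offset q with 0 ≤ q ≤ |u| − m such that for every configuration x ∈ [u]_0 the sequence of words (F^n(x)_{[q,q+m)})_{n≥0} is eventually periodic, i.e. there are t ≥ 0 and p > 0 with F^{n+p}(x)_j = F^n(x)_j for all n ≥ t and all q ≤ j < q+m. -/
/-- `x` belongs to the cylinder `[u]_0`. -/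
def inCylG {S : Type*} (u : List S) (x : ℤ → S) : Prop :=
  ∀ j : Fin u.length, x ((j : ℕ) : ℤ) = u.get j

/-- `u` is an `m`-blocking word for `F`: `u` has length at least `m` and there is an
offset `q` with `q + m ≤ |u|` such that for all `x, y ∈ [u]_0` and all times `n`,
the orbits agree on the cells `q ≤ j < q + m`. -/
def BlockingG {S : Type*} (F : (ℤ → S) → ℤ → S) (m : ℕ) (u : List S) : Prop :=
  m ≤ u.length ∧ ∃ q : ℕ, q + m ≤ u.length ∧
    ∀ x y : ℤ → S, inCylG u x → inCylG u y → ∀ n : ℕ, ∀ j : ℤ,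
      (q : ℤ) ≤ j → j < (q : ℤ) + (m : ℤ) → F^[n] x j = F^[n] y j


section helpers
variable {S : Type*} {r : ℕ} {f : (Fin (2 * r + 1) → S) → S} {F : (ℤ → S) → ℤ → S}

lemma caLocal (hF : ∀ x : ℤ → S, ∀ i : ℤ, F x i = f (fun k => x (i - (r : ℤ) + ((k : ℕ) : ℤ))))
    (n : ℕ) : ∀ (x y : ℤ → S) (j : ℤ),
    (∀ i : ℤ, j - (n : ℤ) * r ≤ i → i ≤ j + (n : ℤ) * r → x i = y i) →
    F^[n] x j = F^[n] y j := by
  induction n with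
  | zero => intro x y j h; simpa using h j (by simp) (by simp)
  | succ n ih =>
    intro x y j h
    rw [Function.iterate_succ_apply, Function.iterate_succ_apply]
    apply ih
    intro i hi1 hi2
    rw [hF, hF]
    congr 1
    funext k
    have hk0 : (0 : ℤ) ≤ (k : ℕ) := by positivity
    have hk : ((k : ℕ) : ℤ) ≤ 2 * r := by
      have := k.2
      omega
    apply h
    · push_cast at hi1 ⊢; nlinarith
    · push_cast at hi2 ⊢; nlinarith

lemma caShift (hF : ∀ x : ℤ → S, ∀ i : ℤ, F x i = f (fun k => x (i - (r : ℤ) + ((k : ℕ) : ℤ))))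
    (c : ℤ) (n : ℕ) : ∀ (x : ℤ → S) (j : ℤ), F^[n] (fun i => x (i + c)) j = F^[n] x (j + c) := by
  induction n with
  | zero => intro x j; simp
  | succ n ih =>
    intro x j
    rw [Function.iterate_succ_apply, Function.iterate_succ_apply]
    have : F (fun i => x (i + c)) = fun i => F x (i + c) := by
      funext i
      rw [hF, hF]
      congr 1
      funext k
      congr 1
      ring
    rw [this, ih]


-- forward direction core, stated with all hypotheses explicit
private lemma fwdCore {S : Type*} [Fintype S] (r m : ℕ) (hr : 1 ≤ r) (hrm : r ≤ m)
    (f : (Fin (2 * r + 1) → S) → S) (F : (ℤ → S) → ℤ → S)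
    (hF : ∀ x : ℤ → S, ∀ i : ℤ, F x i = f (fun k => x (i - (r : ℤ) + ((k : ℕ) : ℤ))))
    (u : List S) (hmu : m ≤ u.length) (q : ℕ) (hq : q + m ≤ u.length)
    (hblock : ∀ x y : ℤ → S, inCylG u x → inCylG u y → ∀ n : ℕ, ∀ j : ℤ,
      (q : ℤ) ≤ j → j < (q : ℤ) + (m : ℤ) → F^[n] x j = F^[n] y j) :
    ∀ x : ℤ → S, inCylG u x → ∃ t p : ℕ, 0 < p ∧
        ∀ n : ℕ, t ≤ n → ∀ j : ℤ, (q : ℤ) ≤ j → j < (q : ℤ) + (m : ℤ) →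
          F^[n + p] x j = F^[n] x j := by
  have hm1 : 1 ≤ m := le_trans hr hrm
  set L := u.length with hLdef
  have hL1 : 1 ≤ L := le_trans hm1 hmu
  have hLpos : (0:ℤ) < (L:ℤ) := by exact_mod_cast hL1
  have hmem : ∀ i : ℤ, 0 ≤ i % (L:ℤ) ∧ i % (L:ℤ) < L := fun i =>
    ⟨Int.emod_nonneg i (by omega), Int.emod_lt_of_pos i hLpos⟩
  have hd : 0 < u.length := hL1
  set d : S := u.get ⟨0, hd⟩ with hddef
  set x₀ : ℤ → S := fun i => u.getD ((i % (L:ℤ)).toNat) d with hx₀def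
  -- x₀ is in the cylinder
  have hx₀cyl : inCylG u x₀ := by
    intro j
    have h1 : ((j:ℕ):ℤ) % (L:ℤ) = (j:ℕ) := Int.emod_eq_of_lt (by positivity) (by exact_mod_cast j.2)
    simp only [hx₀def, h1, Int.toNat_natCast]
    rw [List.getD_eq_getElem u d (by exact j.2)]
    simp [List.get_eq_getElem]
  -- periodicity invariant
  have hP0 : ∀ i : ℤ, x₀ i = x₀ (i % (L:ℤ)) := by
    intro i
    simp only [hx₀def, Int.emod_emod_of_dvd i dvd_rfl]
  have hPcong : ∀ z : ℤ → S, (∀ i : ℤ, z i = z (i % (L:ℤ))) →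
      ∀ a b : ℤ, a % (L:ℤ) = b % (L:ℤ) → z a = z b := by
    intro z hz a b hab
    rw [hz a, hz b, hab]
  have hPF : ∀ z : ℤ → S, (∀ i : ℤ, z i = z (i % (L:ℤ))) →
      ∀ i : ℤ, F z i = F z (i % (L:ℤ)) := by
    intro z hz i
    rw [hF, hF]
    congr 1
    funext k
    apply hPcong z hz
    have h0 : Int.ModEq (L:ℤ) i (i % (L:ℤ)) := (Int.emod_emod_of_dvd i dvd_rfl).symm
    exact (h0.sub_right (r:ℤ)).add_right ((k:ℕ):ℤ)
  have hPn : ∀ n : ℕ, ∀ i : ℤ, F^[n] x₀ i = F^[n] x₀ (i % (L:ℤ)) := by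
    intro n
    induction n with
    | zero => simpa using hP0
    | succ n ih =>
      intro i
      rw [Function.iterate_succ_apply']
      exact hPF _ ih i
  -- pigeonhole
  obtain ⟨a, b, hne, heq⟩ := Finite.exists_ne_map_eq_of_infinite
    (fun n : ℕ => (fun k : Fin L => F^[n] x₀ ((k:ℕ):ℤ)))
  have main : ∀ a b : ℕ, a < b →
      ((fun k : Fin L => F^[a] x₀ ((k:ℕ):ℤ)) = fun k : Fin L => F^[b] x₀ ((k:ℕ):ℤ)) →
      ∀ x : ℤ → S, inCylG u x → ∃ t p : ℕ, 0 < p ∧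
        ∀ n : ℕ, t ≤ n → ∀ j : ℤ, (q : ℤ) ≤ j → j < (q : ℤ) + (m : ℤ) →
          F^[n + p] x j = F^[n] x j := by
    clear hne heq a b
    intro a b hab heq x hx
    have hfull : F^[a] x₀ = F^[b] x₀ := by
      funext i
      have h1 : (((i % (L:ℤ)).toNat : ℕ) : ℤ) = i % (L:ℤ) := Int.toNat_of_nonneg (hmem i).1
      have h2 := congrFun heq ⟨(i % (L:ℤ)).toNat, by have := (hmem i).2; omega⟩
      simp only at h2
      rw [hPn a i, hPn b i, ← h1]
      exact h2
    have hper : ∀ n : ℕ, a ≤ n → F^[n + (b - a)] x₀ = F^[n] x₀ := by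
      intro n hn
      have e1 : n + (b - a) = (n - a) + b := by omega
      have e2 : n = (n - a) + a := by omega
      calc F^[n + (b-a)] x₀ = F^[(n-a) + b] x₀ := by rw [e1]
        _ = F^[n-a] (F^[b] x₀) := Function.iterate_add_apply F (n-a) b x₀
        _ = F^[n-a] (F^[a] x₀) := by rw [hfull]
        _ = F^[(n-a) + a] x₀ := (Function.iterate_add_apply F (n-a) a x₀).symm
        _ = F^[n] x₀ := by rw [← e2]
    refine ⟨a, b - a, by omega, ?_⟩
    intro n hn j hj1 hj2
    calc F^[n + (b-a)] x j = F^[n + (b-a)] x₀ j := hblock x x₀ hx hx₀cyl _ j hj1 hj2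
      _ = F^[n] x₀ j := by rw [hper n hn]
      _ = F^[n] x j := hblock x₀ x hx₀cyl hx n j hj1 hj2
  rcases hne.lt_or_gt with h | h
  · exact main a b h heq
  · exact main b a h heq.symm


private lemma bwdCore {S : Type*} [Fintype S] (r m : ℕ) (hr : 1 ≤ r) (hrm : r ≤ m)
    (f : (Fin (2 * r + 1) → S) → S) (F : (ℤ → S) → ℤ → S)
    (hF : ∀ x : ℤ → S, ∀ i : ℤ, F x i = f (fun k => x (i - (r : ℤ) + ((k : ℕ) : ℤ))))
    (u : List S) (hmu : m ≤ u.length) (q : ℕ) (hq : q + m ≤ u.length)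
    (H : ∀ x : ℤ → S, inCylG u x → ∃ t p : ℕ, 0 < p ∧
        ∀ n : ℕ, t ≤ n → ∀ j : ℤ, (q:ℤ) ≤ j → j < (q:ℤ)+(m:ℤ) → F^[n+p] x j = F^[n] x j) :
    ∃ v : List S, BlockingG F m v := by
  classical
  have hm1 : 1 ≤ m := hr.trans hrm
  set L := u.length with hLdef
  have hL1 : 1 ≤ L := hm1.trans hmu
  set d : S := u.get ⟨0, hL1⟩ with hddef
  set z₀ : ℤ → S := fun i => u.getD i.toNat d with hz₀def
  have hz₀ : inCylG u z₀ := by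
    intro j
    simp only [hz₀def, Int.toNat_natCast]
    rw [List.getD_eq_getElem u d (by exact j.2)]
    simp [List.get_eq_getElem]
  -- KEY: a uniform periodicity pattern exists
  have Key : ∃ (t p N : ℕ) (z : ℤ → S), 0 < p ∧ inCylG u z ∧
      ∀ y : ℤ → S, inCylG u y → (∀ i : ℤ, i.natAbs ≤ N → y i = z i) →
        ∀ n : ℕ, t ≤ n → ∀ j : ℤ, (q:ℤ) ≤ j → j < (q:ℤ)+(m:ℤ) → F^[n+p] y j = F^[n] y j := by
    by_contra hK
    push_neg at hK
    set pk : ℕ → ℕ := fun k => (Nat.unpair k).1 + 1 with hpk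
    have Kch : ∀ (k : ℕ) (z : ℤ → S) (N : ℕ), inCylG u z →
        ∃ w : (ℤ → S) × ℕ, inCylG u w.1 ∧ (∀ i : ℤ, i.natAbs ≤ N → w.1 i = z i) ∧
          N + 1 ≤ w.2 ∧ ∃ n : ℕ, k ≤ n ∧ q + m + (n + pk k) * r ≤ w.2 ∧
          ∃ j : ℤ, (q:ℤ) ≤ j ∧ j < (q:ℤ)+(m:ℤ) ∧ F^[n + pk k] w.1 j ≠ F^[n] w.1 j := by
      intro k z N hz
      obtain ⟨y, hy, hagr, n, hn, j, hj1, hj2, hne⟩ := hK k (pk k) N z (Nat.succ_pos _) hz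
      exact ⟨(y, max (N+1) (q + m + (n + pk k) * r)), hy, hagr, le_max_left _ _, n, hn,
        le_max_right _ _, j, hj1, hj2, hne⟩
    obtain ⟨Z, hZ0, hZs⟩ : ∃ Z : ℕ → (ℤ → S) × ℕ, Z 0 = (z₀, L) ∧
        ∀ k, ∀ h : inCylG u (Z k).1, Z (k+1) = Classical.choose (Kch k (Z k).1 (Z k).2 h) := by
      refine ⟨fun k => Nat.rec (z₀, L)
        (fun k ih => if h : inCylG u ih.1 then Classical.choose (Kch k ih.1 ih.2 h) else ih) k,
        rfl, ?_⟩
      intro k h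
      exact dif_pos h
    have hcyl : ∀ k, inCylG u (Z k).1 := by
      intro k
      induction k with
      | zero => rw [hZ0]; exact hz₀
      | succ k ih =>
        rw [hZs k ih]
        exact (Classical.choose_spec (Kch k (Z k).1 (Z k).2 ih)).1
    have hspec : ∀ k, (∀ i : ℤ, i.natAbs ≤ (Z k).2 → (Z (k+1)).1 i = (Z k).1 i) ∧
        (Z k).2 + 1 ≤ (Z (k+1)).2 ∧ ∃ n : ℕ, k ≤ n ∧ q + m + (n + pk k) * r ≤ (Z (k+1)).2 ∧
        ∃ j : ℤ, (q:ℤ) ≤ j ∧ j < (q:ℤ)+(m:ℤ) ∧ F^[n + pk k] (Z (k+1)).1 j ≠ F^[n] (Z (k+1)).1 j := by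
      intro k
      have h := Classical.choose_spec (Kch k (Z k).1 (Z k).2 (hcyl k))
      rw [← hZs k (hcyl k)] at h
      exact ⟨h.2.1, h.2.2.1, h.2.2.2⟩
    have hNmono : ∀ k l : ℕ, k ≤ l → (Z k).2 ≤ (Z l).2 := by
      intro k l hkl
      induction l, hkl using Nat.le_induction with
      | base => exact le_rfl
      | succ l hkl ih => exact ih.trans (by have := (hspec l).2.1; omega)
    have hNk : ∀ k : ℕ, k + L ≤ (Z k).2 := by
      intro k
      induction k with
      | zero => simp [hZ0]
      | succ k ih => have := (hspec k).2.1; omega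
    have hagr : ∀ k l : ℕ, k ≤ l → ∀ i : ℤ, i.natAbs ≤ (Z k).2 → (Z l).1 i = (Z k).1 i := by
      intro k l hkl
      induction l, hkl using Nat.le_induction with
      | base => intro i _; rfl
      | succ l hkl ih =>
        intro i hi
        rw [(hspec l).1 i (hi.trans (hNmono k l hkl)), ih i hi]
    set xs : ℤ → S := fun i => (Z i.natAbs).1 i with hxsdef
    have hxsagr : ∀ k : ℕ, ∀ i : ℤ, i.natAbs ≤ (Z k).2 → xs i = (Z k).1 i := by
      intro k i hi
      by_cases h : i.natAbs ≤ k
      · have h2 : i.natAbs ≤ (Z i.natAbs).2 := le_trans (by omega) (hNk i.natAbs)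
        exact (hagr i.natAbs k h i h2).symm
      · exact hagr k i.natAbs (by omega) i hi
    have hxscyl : inCylG u xs := by
      intro j
      have hj : ((j:ℕ):ℤ).natAbs ≤ (Z 0).2 := by
        rw [hZ0]
        simp only [Int.natAbs_natCast]
        exact le_of_lt j.2
      rw [hxsagr 0 _ hj, hZ0]
      exact hz₀ j
    have hfail : ∀ k : ℕ, ∃ n : ℕ, k ≤ n ∧ ∃ j : ℤ, (q:ℤ) ≤ j ∧ j < (q:ℤ)+(m:ℤ) ∧
        F^[n + pk k] xs j ≠ F^[n] xs j := by
      intro k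
      obtain ⟨hag, hN1, n, hn, hbound, j, hj1, hj2, hne⟩ := hspec k
      have hb' : ((q + m + (n + pk k) * r : ℕ) : ℤ) ≤ ((Z (k+1)).2 : ℤ) := by exact_mod_cast hbound
      push_cast at hb'
      have hcells : ∀ s : ℕ, s ≤ n + pk k → ∀ i : ℤ,
          j - (s:ℤ) * r ≤ i → i ≤ j + (s:ℤ) * r → xs i = (Z (k+1)).1 i := by
        intro s hs i hi1 hi2
        have hs' : (s : ℤ) * r ≤ ((n + pk k : ℕ) : ℤ) * r := by
          have : (s:ℤ) ≤ ((n + pk k : ℕ) : ℤ) := by exact_mod_cast hs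
          have hr0 : (0:ℤ) ≤ (r:ℤ) := by positivity
          exact mul_le_mul_of_nonneg_right this hr0
        push_cast at hs'
        apply hxsagr (k+1)
        have h1 : -(((Z (k+1)).2 : ℤ)) ≤ i := by linarith
        have h2 : i ≤ ((Z (k+1)).2 : ℤ) := by linarith
        omega
      refine ⟨n, hn, j, hj1, hj2, ?_⟩
      have e1 : F^[n + pk k] xs j = F^[n + pk k] (Z (k+1)).1 j := by
        apply caLocal hF
        intro i hi1 hi2
        exact hcells (n + pk k) le_rfl i (by push_cast at hi1 ⊢; linarith) (by push_cast at hi2 ⊢; linarith)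
      have e2 : F^[n] xs j = F^[n] (Z (k+1)).1 j := by
        apply caLocal hF
        intro i hi1 hi2
        have hsle : (n:ℤ)*r ≤ ((n + pk k : ℕ):ℤ)*r := by
          have : (n:ℤ) ≤ ((n + pk k : ℕ):ℤ) := by exact_mod_cast Nat.le_add_right n (pk k)
          have hr0 : (0:ℤ) ≤ (r:ℤ) := by positivity
          exact mul_le_mul_of_nonneg_right this hr0
        exact hcells n (Nat.le_add_right _ _) i hi1 hi2
      rw [e1, e2]
      exact hne
    obtain ⟨t, p, hp, hper⟩ := H xs hxscyl
    set k := Nat.pair (p-1) t with hkdef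
    have hpkk : pk k = p := by
      rw [hpk]
      simp only [hkdef, Nat.unpair_pair]
      omega
    have hkt : t ≤ k := Nat.right_le_pair _ _
    obtain ⟨n, hn, j, hj1, hj2, hne⟩ := hfail k
    rw [hpkk] at hne
    exact hne (hper n (hkt.trans hn) j hj1 hj2)
  -- construct the blocking word from Key
  obtain ⟨t, p, N, z, hp, hzcyl, hkey⟩ := Key
  set N' : ℕ := max N ((t+p)*r + (q+m) + L) with hN'def
  have hN'1 : N ≤ N' := le_max_left _ _
  have hN'2 : (t+p)*r + (q+m) + L ≤ N' := le_max_right _ _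
  set v : List S := (List.range (2*N'+1)).map (fun i : ℕ => z ((i:ℤ) - (N':ℤ))) with hvdef
  have hvlen : v.length = 2*N'+1 := by simp [hvdef]
  -- any x in [v] agrees with z on [-N', N'] after shifting
  have htrans : ∀ x : ℤ → S, inCylG v x → ∀ i : ℤ, i.natAbs ≤ N' → x (i + (N':ℤ)) = z i := by
    intro x hx i hi
    have h0 : (0:ℤ) ≤ i + N' := by omega
    have h1 : (i + (N':ℤ)).toNat < v.length := by rw [hvlen]; omega
    have h2 := hx ⟨(i + (N':ℤ)).toNat, h1⟩
    have h3 : (((i + (N':ℤ)).toNat : ℕ) : ℤ) = i + N' := Int.toNat_of_nonneg h0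
    rw [h3] at h2
    rw [h2]
    simp only [hvdef, List.get_eq_getElem, List.getElem_map, List.getElem_range]
    congr 1
    omega
  -- window trace of any x in [v] equals the trace of z
  have hinit : ∀ x' : ℤ → S, (∀ i : ℤ, i.natAbs ≤ N' → x' i = z i) →
      ∀ n : ℕ, n ≤ t + p → ∀ j : ℤ, (q:ℤ) ≤ j → j < (q:ℤ)+(m:ℤ) → F^[n] x' j = F^[n] z j := by
    intro x' hagr n hn j hj1 hj2
    apply caLocal hF
    intro i hi1 hi2
    apply hagr
    have hb : (n:ℤ)*r ≤ ((t+p : ℕ):ℤ)*r := by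
      have : (n:ℤ) ≤ ((t+p:ℕ):ℤ) := by exact_mod_cast hn
      have hr0 : (0:ℤ) ≤ (r:ℤ) := by positivity
      exact mul_le_mul_of_nonneg_right this hr0
    have hN2' : (((t+p)*r + (q+m) + L : ℕ) : ℤ) ≤ (N' : ℤ) := by exact_mod_cast hN'2
    push_cast at hb hN2'
    have h1 : -((N':ℤ)) ≤ i := by linarith
    have h2 : i ≤ (N':ℤ) := by linarith
    omega
  have htrace : ∀ x' : ℤ → S, inCylG u x' → (∀ i : ℤ, i.natAbs ≤ N' → x' i = z i) →
      ∀ n : ℕ, ∀ j : ℤ, (q:ℤ) ≤ j → j < (q:ℤ)+(m:ℤ) → F^[n] x' j = F^[n] z j := by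
    intro x' h1 h2 n
    induction n using Nat.strong_induction_on with
    | _ n ih =>
      intro j hj1 hj2
      by_cases hcase : n ≤ t + p
      · exact hinit x' h2 n hcase j hj1 hj2
      · have hnp : n - p + p = n := by omega
        have h3 : t ≤ n - p := by omega
        have hagrN : ∀ i : ℤ, i.natAbs ≤ N → x' i = z i := fun i hi => h2 i (hi.trans hN'1)
        calc F^[n] x' j = F^[(n-p) + p] x' j := by rw [hnp]
          _ = F^[n-p] x' j := hkey x' h1 hagrN (n-p) h3 j hj1 hj2
          _ = F^[n-p] z j := ih (n-p) (by omega) j hj1 hj2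
          _ = F^[(n-p)+p] z j := (hkey z hzcyl (fun i _ => rfl) (n-p) h3 j hj1 hj2).symm
          _ = F^[n] z j := by rw [hnp]
  refine ⟨v, ?_, q + N', ?_, ?_⟩
  · rw [hvlen]; omega
  · rw [hvlen]; omega
  · intro x y hx hy n j hj1 hj2
    push_cast at hj1 hj2
    have hwin1 : (q:ℤ) ≤ j - N' := by linarith
    have hwin2 : j - (N':ℤ) < (q:ℤ) + m := by linarith
    have key : ∀ w : ℤ → S, inCylG v w → F^[n] w j = F^[n] z (j - N') := by
      intro w hw
      have hagr' : ∀ i : ℤ, i.natAbs ≤ N' → (fun i => w (i + (N':ℤ))) i = z i :=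
        fun i hi => htrans w hw i hi
      have hwcyl : inCylG u (fun i => w (i + (N':ℤ))) := by
        intro j'
        have hj' : ((j':ℕ):ℤ).natAbs ≤ N' := by
          simp only [Int.natAbs_natCast]
          have := j'.2
          omega
        rw [hagr' _ hj']
        exact hzcyl j'
      have hsh := caShift hF (N':ℤ) n w (j - N')
      have : F^[n] w j = F^[n] (fun i => w (i + (N':ℤ))) (j - N') := by
        rw [hsh]
        congr 1
        ring
      rw [this]
      exact htrace _ hwcyl hagr' n (j - N') hwin1 hwin2
    rw [key x hx, key y hy]

end helpers

/-- For a one-dimensional cellular automaton `F` over a finite alphabet `S` with radius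
`r ≥ 1` (given by a local function `f` on `2r+1` cells) and `m ≥ r`, the following are
equivalent: (1) `F` has an `m`-blocking word; (2) there is a word `u` over `S` with
`|u| ≥ m` and an offset `q` with `q + m ≤ |u|` such that for every configuration
`x ∈ [u]_0` the sequence of words `(F^n(x)_{[q,q+m)})_{n ≥ 0}` is eventually periodic,
i.e. there are `t ≥ 0` and `p > 0` with `F^{n+p}(x)_j = F^n(x)_j` for all `n ≥ t` and
all `q ≤ j < q + m`. -/
theorem blocking_iff_eventually_periodic_trace
    {S : Type*} [Fintype S] (r m : ℕ) (hr : 1 ≤ r) (hrm : r ≤ m)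
    (f : (Fin (2 * r + 1) → S) → S) (F : (ℤ → S) → ℤ → S)
    (hF : ∀ x : ℤ → S, ∀ i : ℤ, F x i = f (fun k => x (i - (r : ℤ) + ((k : ℕ) : ℤ)))) :
    (∃ u : List S, BlockingG F m u) ↔
    (∃ u : List S, m ≤ u.length ∧ ∃ q : ℕ, q + m ≤ u.length ∧
      ∀ x : ℤ → S, inCylG u x → ∃ t p : ℕ, 0 < p ∧
        ∀ n : ℕ, t ≤ n → ∀ j : ℤ, (q : ℤ) ≤ j → j < (q : ℤ) + (m : ℤ) →
          F^[n + p] x j = F^[n] x j) := by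
  constructor
  · rintro ⟨u, hbl⟩
    obtain ⟨hmu, q, hq, hblock⟩ := hbl
    exact ⟨u, hmu, q, hq, fwdCore r m hr hrm f F hF u hmu q hq hblock⟩
  · rintro ⟨u, hmu, q, hq, H⟩
    exact bwdCore r m hr hrm f F hF u hmu q hq H
end

section
/- The following words are invariant with the indicated period for the indicated ECA rules, i.e. for each listed word w of length l, period p, and each listed rule number N, every configuration x ∈ [w]_0 satisfies F_N^p(x)_i = x_i for all 0 ≤ i < l. Period p = 1: word '0' for rules 0, 4, 8, 12, 72, 76, 128, 132, 136, 140, 200, 204; word '00' for rules 32, 36, 40, 44, 104, 108, 160, 164, 168, 172, 232; word '01' for rules 13, 28, 29, 77, 156; word '10' for rule 78; word '010' for rule 5; word '101' for rule 94; word '0110' for rule 73. Period p = 2: word '1' for rule 1; word '0' for rule 51; word '00' for rules 19, 23; word '01' for rules 50, 178; word '000' for rule 33. -/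
/-- Cantor metric on configurations `ℤ → Bool`. -/
noncomputable def dC (x y : ℤ → Bool) : ℝ :=
  ∑' i : ℤ, if x i = y i then 0 else (1 / 2 : ℝ) ^ i.natAbs

/-- Local rule of the ECA with rule number `N`:
`(a,b,c)` is mapped to the coefficient of `2^(4a+2b+c)` in the binary expansion of `N`. -/
def localRule (N : ℕ) (a b c : Bool) : Bool :=
  N.testBit (4 * a.toNat + 2 * b.toNat + c.toNat)

/-- The elementary cellular automaton with rule number `N`. -/
def eca (N : ℕ) (x : ℤ → Bool) : ℤ → Bool :=
  fun i => localRule N (x (i - 1)) (x i) (x (i + 1))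

/-- `x` belongs to the cylinder `[u]_0`. -/
def inCyl (u : List Bool) (x : ℤ → Bool) : Prop :=
  ∀ j : Fin u.length, x ((j : ℕ) : ℤ) = u.get j

/-- `u` is an `m`-blocking word for `F`. -/
def Blocking (F : (ℤ → Bool) → ℤ → Bool) (m : ℕ) (u : List Bool) : Prop :=
  m ≤ u.length ∧ ∃ q : ℕ, q + m ≤ u.length ∧
    ∀ x y : ℤ → Bool, inCyl u x → inCyl u y → ∀ n : ℕ, ∀ j : ℤ,
      (q : ℤ) ≤ j → j < (q : ℤ) + (m : ℤ) → F^[n] x j = F^[n] y j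

/-- `x` is an equicontinuity point of `F`. -/
def EquicontinuityPoint (F : (ℤ → Bool) → ℤ → Bool) (x : ℤ → Bool) : Prop :=
  ∀ ε : ℝ, 0 < ε → ∃ δ : ℝ, 0 < δ ∧ ∀ y : ℤ → Bool, dC x y < δ →
    ∀ n : ℕ, dC (F^[n] x) (F^[n] y) < ε

/-- `F` is almost equicontinuous: it has at least one equicontinuity point. -/
def AlmostEquicontinuousCA (F : (ℤ → Bool) → ℤ → Bool) : Prop :=
  ∃ x : ℤ → Bool, EquicontinuityPoint F x

/-- `F` is equicontinuous: every point is an equicontinuity point. -/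
def EquicontinuousCA (F : (ℤ → Bool) → ℤ → Bool) : Prop :=
  ∀ x : ℤ → Bool, EquicontinuityPoint F x

/-- `F` is sensitive to initial conditions. -/
def SensitiveCA (F : (ℤ → Bool) → ℤ → Bool) : Prop :=
  ∃ ε : ℝ, 0 < ε ∧ ∀ x : ℤ → Bool, ∀ δ : ℝ, 0 < δ →
    ∃ y : ℤ → Bool, dC x y < δ ∧ ∃ n : ℕ, ε ≤ dC (F^[n] x) (F^[n] y)

/-- `F` is positively expansive. -/
def PosExpansiveCA (F : (ℤ → Bool) → ℤ → Bool) : Prop :=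
  ∃ ε : ℝ, 0 < ε ∧ ∀ x y : ℤ → Bool, x ≠ y →
    ∃ n : ℕ, ε ≤ dC (F^[n] x) (F^[n] y)

/-- The power `σ^q` of the shift map, for `q : ℤ` : `(σ^q x)_i = x_{i+q}`. -/
def shiftBy (q : ℤ) (x : ℤ → Bool) : ℤ → Bool := fun i => x (i + q)

/-- `F` is left-permutive. -/
def LeftPermutive (N : ℕ) : Prop :=
  ∀ b c : Bool, Function.Bijective (fun a => localRule N a b c)

/-- `F` is right-permutive. -/
def RightPermutive (N : ℕ) : Prop :=
  ∀ a b : Bool, Function.Bijective (fun c => localRule N a b c)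

/-- `U` is open in the Cantor metric topology. -/
def IsOpenC (U : Set (ℤ → Bool)) : Prop :=
  ∀ x ∈ U, ∃ δ : ℝ, 0 < δ ∧ ∀ y : ℤ → Bool, dC x y < δ → y ∈ U

/-- `F` is topologically transitive. -/
def TransitiveCA (F : (ℤ → Bool) → ℤ → Bool) : Prop :=
  ∀ U V : Set (ℤ → Bool), IsOpenC U → IsOpenC V → U.Nonempty → V.Nonempty →
    ∃ n : ℕ, 0 < n ∧ ((F^[n]) '' U ∩ V).Nonempty

/-- The word `u` is invariant with period `p` for ECA rule `N`: every configuration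
`x ∈ [u]_0` satisfies `F_N^p(x)_i = x_i` for all `0 ≤ i < |u|`. -/
def InvariantWithPeriod (N p : ℕ) (u : List Bool) : Prop :=
  ∀ x : ℤ → Bool, inCyl u x →
    ∀ j : Fin u.length, (eca N)^[p] x ((j : ℕ) : ℤ) = x ((j : ℕ) : ℤ)

set_option maxHeartbeats 4000000 in
/-- The list of invariant words with their periods and the corresponding ECA rules.
Here `false` codes state `0` and `true` codes state `1`. -/
theorem invariant_words_table :
    (∀ N ∈ ({0, 4, 8, 12, 72, 76, 128, 132, 136, 140, 200, 204} : Finset ℕ),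
      InvariantWithPeriod N 1 [false]) ∧
    (∀ N ∈ ({32, 36, 40, 44, 104, 108, 160, 164, 168, 172, 232} : Finset ℕ),
      InvariantWithPeriod N 1 [false, false]) ∧
    (∀ N ∈ ({13, 28, 29, 77, 156} : Finset ℕ),
      InvariantWithPeriod N 1 [false, true]) ∧
    InvariantWithPeriod 78 1 [true, false] ∧
    InvariantWithPeriod 5 1 [false, true, false] ∧
    InvariantWithPeriod 94 1 [true, false, true] ∧
    InvariantWithPeriod 73 1 [false, true, true, false] ∧
    InvariantWithPeriod 1 2 [true] ∧
    InvariantWithPeriod 51 2 [false] ∧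
    (∀ N ∈ ({19, 23} : Finset ℕ), InvariantWithPeriod N 2 [false, false]) ∧
    (∀ N ∈ ({50, 178} : Finset ℕ), InvariantWithPeriod N 2 [false, true]) ∧
    InvariantWithPeriod 33 2 [false, false, false] := by
  constructor
  · intro N hN
    fin_cases hN <;>
    · intro x hx j
      have h0 := hx ⟨0, by norm_num⟩
      norm_num at h0
      fin_cases j <;>
        simp only [Function.iterate_succ, Function.iterate_zero, Function.comp_apply,
          id_eq, eca] <;>
        (try norm_num) <;>
        (cases hA : x (-1) <;> cases hB : x 1 <;> simp_all [localRule]) <;> decide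
  refine ⟨?_, ?_, ?_, ?_, ?_, ?_, ?_, ?_, ?_, ?_, ?_⟩
  · intro N hN
    fin_cases hN <;>
    · intro x hx j
      have h0 := hx ⟨0, by norm_num⟩
      have h1 := hx ⟨1, by norm_num⟩
      norm_num at h0 h1
      fin_cases j <;>
        simp only [Function.iterate_succ, Function.iterate_zero, Function.comp_apply,
          id_eq, eca] <;>
        (try norm_num) <;>
        (cases hA : x (-1) <;> cases hB : x 2 <;> simp_all [localRule]) <;> decide
  · intro N hN
    fin_cases hN <;>
    · intro x hx j
      have h0 := hx ⟨0, by norm_num⟩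
      have h1 := hx ⟨1, by norm_num⟩
      norm_num at h0 h1
      fin_cases j <;>
        simp only [Function.iterate_succ, Function.iterate_zero, Function.comp_apply,
          id_eq, eca] <;>
        (try norm_num) <;>
        (cases hA : x (-1) <;> cases hB : x 2 <;> simp_all [localRule]) <;> decide
  · intro x hx j
    have h0 := hx ⟨0, by norm_num⟩
    have h1 := hx ⟨1, by norm_num⟩
    norm_num at h0 h1
    fin_cases j <;>
      simp only [Function.iterate_succ, Function.iterate_zero, Function.comp_apply,
        id_eq, eca] <;>
      (try norm_num) <;>
      (cases hA : x (-1) <;> cases hB : x 2 <;> simp_all [localRule]) <;> decide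
  · intro x hx j
    have h0 := hx ⟨0, by norm_num⟩
    have h1 := hx ⟨1, by norm_num⟩
    have h2 := hx ⟨2, by norm_num⟩
    norm_num at h0 h1 h2
    fin_cases j <;>
      simp only [Function.iterate_succ, Function.iterate_zero, Function.comp_apply,
        id_eq, eca] <;>
      (try norm_num) <;>
      (cases hA : x (-1) <;> cases hB : x 3 <;> simp_all [localRule]) <;> decide
  · intro x hx j
    have h0 := hx ⟨0, by norm_num⟩
    have h1 := hx ⟨1, by norm_num⟩
    have h2 := hx ⟨2, by norm_num⟩
    norm_num at h0 h1 h2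
    fin_cases j <;>
      simp only [Function.iterate_succ, Function.iterate_zero, Function.comp_apply,
        id_eq, eca] <;>
      (try norm_num) <;>
      (cases hA : x (-1) <;> cases hB : x 3 <;> simp_all [localRule]) <;> decide
  · intro x hx j
    have h0 := hx ⟨0, by norm_num⟩
    have h1 := hx ⟨1, by norm_num⟩
    have h2 := hx ⟨2, by norm_num⟩
    have h3 := hx ⟨3, by norm_num⟩
    norm_num at h0 h1 h2 h3
    fin_cases j <;>
      simp only [Function.iterate_succ, Function.iterate_zero, Function.comp_apply,
        id_eq, eca] <;>
      (try norm_num) <;>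
      (cases hA : x (-1) <;> cases hB : x 4 <;> simp_all [localRule]) <;> decide
  · intro x hx j
    have h0 := hx ⟨0, by norm_num⟩
    norm_num at h0
    fin_cases j <;>
      simp only [Function.iterate_succ, Function.iterate_zero, Function.comp_apply,
        id_eq, eca] <;>
      (try norm_num) <;>
      (cases hA : x (-2) <;> cases hB : x (-1) <;> cases hC : x 1 <;> cases hD : x 2 <;>
        simp_all [localRule]) <;> decide
  · intro x hx j
    have h0 := hx ⟨0, by norm_num⟩
    norm_num at h0
    fin_cases j <;>
      simp only [Function.iterate_succ, Function.iterate_zero, Function.comp_apply,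
        id_eq, eca] <;>
      (try norm_num) <;>
      (cases hA : x (-2) <;> cases hB : x (-1) <;> cases hC : x 1 <;> cases hD : x 2 <;>
        simp_all [localRule]) <;> decide
  · intro N hN
    fin_cases hN <;>
    · intro x hx j
      have h0 := hx ⟨0, by norm_num⟩
      have h1 := hx ⟨1, by norm_num⟩
      norm_num at h0 h1
      fin_cases j <;>
        simp only [Function.iterate_succ, Function.iterate_zero, Function.comp_apply,
          id_eq, eca] <;>
        (try norm_num) <;>
        (cases hA : x (-2) <;> cases hB : x (-1) <;> cases hC : x 2 <;> cases hD : x 3 <;>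
          simp_all [localRule]) <;> decide
  · intro N hN
    fin_cases hN <;>
    · intro x hx j
      have h0 := hx ⟨0, by norm_num⟩
      have h1 := hx ⟨1, by norm_num⟩
      norm_num at h0 h1
      fin_cases j <;>
        simp only [Function.iterate_succ, Function.iterate_zero, Function.comp_apply,
          id_eq, eca] <;>
        (try norm_num) <;>
        (cases hA : x (-2) <;> cases hB : x (-1) <;> cases hC : x 2 <;> cases hD : x 3 <;>
          simp_all [localRule]) <;> decide
  · intro x hx j
    have h0 := hx ⟨0, by norm_num⟩
    have h1 := hx ⟨1, by norm_num⟩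
    have h2 := hx ⟨2, by norm_num⟩
    norm_num at h0 h1 h2
    fin_cases j <;>
      simp only [Function.iterate_succ, Function.iterate_zero, Function.comp_apply,
        id_eq, eca] <;>
      (try norm_num) <;>
      (cases hA : x (-2) <;> cases hB : x (-1) <;> cases hC : x 3 <;> cases hD : x 4 <;>
        simp_all [localRule]) <;> decide
end

section
/- For every rule number N in the set {0, 1, 4, 5, 8, 12, 19, 29, 36, 51, 72, 76, 108, 200, 204}, the elementary cellular automaton F_N is equicontinuous. -/
set_option maxRecDepth 100000
set_option maxHeartbeats 1000000


section AuxEquicont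

/-! Auxiliary lemmas for `eca_equicontinuous_rules`. -/

noncomputable def Cconst : ℝ := ∑' i : ℤ, ((1:ℝ)/2) ^ (i.natAbs / 2)

lemma half_pow_div_le : ∀ n : ℕ, ((1:ℝ)/2) ^ (n / 2) ≤ 2 * ((3:ℝ)/4) ^ n := by
  intro n
  induction n using Nat.strong_induction_on with
  | _ n ih =>
    match n with
    | 0 => norm_num
    | 1 => norm_num
    | (m+2) =>
      have h := ih m (by omega)
      have h2 : (m+2)/2 = m/2 + 1 := by omega
      rw [h2, pow_succ, show m + 2 = (m + 1) + 1 from rfl, pow_succ, pow_succ]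
      nlinarith [pow_nonneg (by norm_num : (0:ℝ) ≤ 3/4) m,
        pow_nonneg (by norm_num : (0:ℝ) ≤ 1/2) (m/2)]

lemma summable34 : Summable (fun i : ℤ => ((3:ℝ)/4) ^ i.natAbs) := by
  apply Summable.of_nat_of_neg
  · simpa using summable_geometric_of_lt_one (by norm_num : (0:ℝ) ≤ 3/4) (by norm_num)
  · simpa using summable_geometric_of_lt_one (by norm_num : (0:ℝ) ≤ 3/4) (by norm_num)

lemma summableHalfDiv : Summable (fun i : ℤ => ((1:ℝ)/2) ^ (i.natAbs / 2)) := by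
  have hs : Summable (fun i : ℤ => 2 * ((3:ℝ)/4) ^ i.natAbs) := summable34.mul_left 2
  exact Summable.of_nonneg_of_le (fun i => by positivity)
    (fun i => half_pow_div_le i.natAbs) hs

lemma Cconst_pos : 0 < Cconst := by
  have h1 : ((1:ℝ)/2) ^ ((0:ℤ).natAbs / 2) ≤ Cconst :=
    Summable.le_tsum summableHalfDiv 0 (fun j _ => by positivity)
  simp at h1
  linarith

lemma summable_dC (x y : ℤ → Bool) :
    Summable (fun i : ℤ => if x i = y i then (0:ℝ) else ((1:ℝ)/2) ^ i.natAbs) := by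
  apply Summable.of_nonneg_of_le (fun i => by positivity) _ summable34
  intro i
  by_cases h : x i = y i
  · simp [h]; positivity
  · simp only [h, if_false]
    exact pow_le_pow_left₀ (by norm_num) (by norm_num) _

lemma dC_le (x y : ℤ → Bool) (K : ℕ) (h : ∀ i : ℤ, i.natAbs ≤ 2*K → x i = y i) :
    dC x y ≤ ((1:ℝ)/2) ^ K * Cconst := by
  have hpt : ∀ i : ℤ, (if x i = y i then (0:ℝ) else ((1:ℝ)/2) ^ i.natAbs)
      ≤ ((1:ℝ)/2) ^ K * ((1:ℝ)/2) ^ (i.natAbs / 2) := by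
    intro i
    by_cases hxy : x i = y i
    · simp only [hxy, if_true]; positivity
    · simp only [hxy, if_false]
      have hn : ¬ (i.natAbs ≤ 2*K) := fun hK => hxy (h i hK)
      rw [← pow_add]
      exact pow_le_pow_of_le_one (by norm_num) (by norm_num) (by omega)
  calc dC x y ≤ ∑' i : ℤ, ((1:ℝ)/2) ^ K * ((1:ℝ)/2) ^ (i.natAbs / 2) :=
        Summable.tsum_le_tsum hpt (summable_dC x y) (summableHalfDiv.mul_left _)
    _ = ((1:ℝ)/2) ^ K * Cconst := tsum_mul_left

lemma agree_of_dC_lt (x y : ℤ → Bool) (M : ℕ) (h : dC x y < ((1:ℝ)/2) ^ M) :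
    ∀ i : ℤ, i.natAbs ≤ M → x i = y i := by
  intro i hi
  by_contra hne
  have h1 : ((1:ℝ)/2) ^ M ≤ ((1:ℝ)/2) ^ i.natAbs :=
    pow_le_pow_of_le_one (by norm_num) (by norm_num) hi
  have h2 : (if x i = y i then (0:ℝ) else ((1:ℝ)/2) ^ i.natAbs) ≤ dC x y :=
    Summable.le_tsum (summable_dC x y) i (fun j _ => by positivity)
  rw [if_neg hne] at h2
  linarith

lemma eca_local (N : ℕ) : ∀ n : ℕ, ∀ x y : ℤ → Bool, ∀ j : ℤ,
    (∀ i : ℤ, (i - j).natAbs ≤ n → x i = y i) → (eca N)^[n] x j = (eca N)^[n] y j := by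
  intro n
  induction n with
  | zero => intro x y j h; simpa using h j (by simp)
  | succ n ih =>
    intro x y j h
    rw [Function.iterate_succ_apply, Function.iterate_succ_apply]
    apply ih
    intro i hi
    simp only [eca]
    rw [h (i-1) (by omega), h i (by omega), h (i+1) (by omega)]

lemma eca_shift (N : ℕ) (q : ℤ) (x : ℤ → Bool) :
    eca N (shiftBy q x) = shiftBy q (eca N x) := by
  funext i
  simp only [eca, shiftBy]
  rw [show i - 1 + q = i + q - 1 by ring, show i + 1 + q = i + q + 1 by ring]

lemma iter_shift (N : ℕ) (n : ℕ) (q : ℤ) (x : ℤ → Bool) :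
    (eca N)^[n] (shiftBy q x) = shiftBy q ((eca N)^[n] x) := by
  induction n generalizing x with
  | zero => rfl
  | succ n ih =>
    rw [Function.iterate_succ_apply, Function.iterate_succ_apply, eca_shift, ih]

def extW (q : ℕ) (w : Fin (2*q+1) → Bool) : ℤ → Bool :=
  fun i => if h : 0 ≤ i + q ∧ i + q < 2*q+1 then w ⟨(i + q).toNat, by omega⟩ else false

lemma window_eq (N p q : ℕ) (hpq : p ≤ q)
    (h : ∀ w : Fin (2*q+1) → Bool, (eca N)^[q] (extW q w) 0 = (eca N)^[p] (extW q w) 0) :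
    (eca N)^[q] = (eca N)^[p] := by
  have key : ∀ y : ℤ → Bool, (eca N)^[q] y 0 = (eca N)^[p] y 0 := by
    intro y
    set w : Fin (2*q+1) → Bool := fun k => y ((k : ℤ) - q) with hw
    have hagree : ∀ i : ℤ, (i - 0).natAbs ≤ q → y i = extW q w i := by
      intro i hi
      have h0 : 0 ≤ i + q ∧ i + q < 2*q+1 := by omega
      simp only [extW, dif_pos h0, hw]
      congr 1
      omega
    calc (eca N)^[q] y 0 = (eca N)^[q] (extW q w) 0 := eca_local N q _ _ 0 hagree
      _ = (eca N)^[p] (extW q w) 0 := h w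
      _ = (eca N)^[p] y 0 :=
        (eca_local N p _ _ 0 (fun i hi => (hagree i (le_trans hi hpq)))).symm
  funext x j
  have hk := key (shiftBy j x)
  rw [iter_shift, iter_shift] at hk
  simpa [shiftBy] using hk

lemma radius_bound (N p q : ℕ) (heq : (eca N)^[q] = (eca N)^[p]) (hpq : p < q) :
    ∀ n : ℕ, ∀ x y : ℤ → Bool, ∀ j : ℤ,
      (∀ i : ℤ, (i - j).natAbs ≤ q → x i = y i) → (eca N)^[n] x j = (eca N)^[n] y j := by
  intro n
  induction n using Nat.strong_induction_on with
  | _ n ih =>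
    intro x y j h
    by_cases hn : n ≤ q
    · exact eca_local N n x y j (fun i hi => h i (le_trans hi hn))
    · have hiter : (eca N)^[n] = (eca N)^[p + (n - q)] := by
        conv_lhs => rw [show n = q + (n - q) by omega]
        rw [Function.iterate_add, heq, ← Function.iterate_add]
      rw [hiter]
      exact ih _ (by omega) x y j h

lemma equicont_of_radius (N r : ℕ)
    (h : ∀ n : ℕ, ∀ x y : ℤ → Bool, ∀ j : ℤ,
      (∀ i : ℤ, (i - j).natAbs ≤ r → x i = y i) → (eca N)^[n] x j = (eca N)^[n] y j) :
    EquicontinuousCA (eca N) := by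
  intro x ε hε
  obtain ⟨K, hK⟩ := exists_pow_lt_of_lt_one (div_pos hε Cconst_pos) (by norm_num : (1:ℝ)/2 < 1)
  refine ⟨((1:ℝ)/2) ^ (2*K + r), pow_pos (by norm_num) _, ?_⟩
  intro y hy n
  have hag := agree_of_dC_lt x y (2*K + r) hy
  have himg : ∀ j : ℤ, j.natAbs ≤ 2*K → (eca N)^[n] x j = (eca N)^[n] y j := by
    intro j hj
    exact h n x y j (fun i hi => hag i (by omega))
  have hle := dC_le _ _ K himg
  have hlt : ((1:ℝ)/2) ^ K * Cconst < ε := by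
    have := mul_lt_mul_of_pos_right hK Cconst_pos
    rwa [div_mul_cancel₀ _ (ne_of_gt Cconst_pos)] at this
  linarith

lemma rule_equi (N p q : ℕ) (hpq : p < q)
    (h : ∀ w : Fin (2*q+1) → Bool, (eca N)^[q] (extW q w) 0 = (eca N)^[p] (extW q w) 0) :
    EquicontinuousCA (eca N) :=
  equicont_of_radius N q (radius_bound N p q (window_eq N p q hpq.le h) hpq)

end AuxEquicont

/-- The listed ECA rules are equicontinuous. -/
theorem eca_equicontinuous_rules :
    ∀ N ∈ ({0, 1, 4, 5, 8, 12, 19, 29, 36, 51, 72, 76, 108, 200, 204} : Finset ℕ),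
      EquicontinuousCA (eca N) := by
  intro N hN
  fin_cases hN
  · exact rule_equi 0 1 2 (by norm_num) (by decide)
  · exact rule_equi 1 1 3 (by norm_num) (by decide)
  · exact rule_equi 4 1 2 (by norm_num) (by decide)
  · exact rule_equi 5 1 3 (by norm_num) (by decide)
  · exact rule_equi 8 2 3 (by norm_num) (by decide)
  · exact rule_equi 12 1 2 (by norm_num) (by decide)
  · exact rule_equi 19 2 4 (by norm_num) (by decide)
  · exact rule_equi 29 1 3 (by norm_num) (by decide)
  · exact rule_equi 36 2 3 (by norm_num) (by decide)
  · exact rule_equi 51 0 2 (by norm_num) (by decide)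
  · exact rule_equi 72 2 3 (by norm_num) (by decide)
  · exact rule_equi 76 1 2 (by norm_num) (by decide)
  · exact rule_equi 108 2 4 (by norm_num) (by decide)
  · exact rule_equi 200 1 2 (by norm_num) (by decide)
  · exact rule_equi 204 0 1 (by norm_num) (by decide)
end

section
/- For every rule number N in the set {90, 105, 150}, the elementary cellular automaton F_N is positively expansive. -/
/-!
A bipermutive rule is positively expansive with constant `1/2`. If two orbits stay within
distance `1/2`, they agree at cells `0` and `1` at every time. Since `F(x)_j` determines `x_{j+1}`
from `x_{j-1}, x_j` (right permutivity) and `x_{j-1}` from `x_j, x_{j+1}` (left permutivity), agreement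
of all iterates on two adjacent cells spreads to all of `ℤ`. Rules 90, 105 and 150 are `a ⊕ c`,
`¬(a ⊕ b ⊕ c)` and `a ⊕ b ⊕ c`, all bipermutive.
-/

lemma summable_half_pow_natAbs : Summable (fun i : ℤ => (1 / 2 : ℝ) ^ i.natAbs) := by
  have h := summable_geometric_of_lt_one (by norm_num : (0 : ℝ) ≤ 1 / 2) (by norm_num)
  exact Summable.of_nat_of_neg (by simpa using h) (by simpa using h)

lemma half_pow_natAbs_le_dC {x y : ℤ → Bool} {j : ℤ} (hne : x j ≠ y j) :
    (1 / 2 : ℝ) ^ j.natAbs ≤ dC x y := by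
  have hsum : Summable (fun i : ℤ => if x i = y i then (0 : ℝ) else (1 / 2) ^ i.natAbs) :=
    summable_half_pow_natAbs.of_nonneg_of_le (fun i => by split <;> positivity)
      (fun i => by split <;> simp)
  simpa [dC, hne] using hsum.le_tsum j (fun i _ => by split <;> positivity)

lemma apply_eq_of_dC_lt {x y : ℤ → Bool} {j : ℤ} (h : dC x y < (1 / 2 : ℝ) ^ j.natAbs) :
    x j = y j := by
  by_contra hne
  exact (half_pow_natAbs_le_dC hne).not_gt h

def OrbitsAgreeAt (N : ℕ) (x y : ℤ → Bool) (j : ℤ) : Prop :=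
  ∀ n : ℕ, (eca N)^[n] x j = (eca N)^[n] y j

section Permutive

variable {N : ℕ} {x y : ℤ → Bool}

lemma eca_iterate_succ_apply (n : ℕ) (j : ℤ) :
    (eca N)^[n + 1] x j =
      localRule N ((eca N)^[n] x (j - 1)) ((eca N)^[n] x j) ((eca N)^[n] x (j + 1)) :=
  congrFun (Function.iterate_succ_apply' (eca N) n x) j

lemma RightPermutive.orbitsAgreeAt_add_one (hR : RightPermutive N) {j : ℤ}
    (h₁ : OrbitsAgreeAt N x y (j - 1)) (h₂ : OrbitsAgreeAt N x y j) :
    OrbitsAgreeAt N x y (j + 1) := fun n => by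
  have h := h₂ (n + 1)
  rw [eca_iterate_succ_apply, eca_iterate_succ_apply, h₁ n, h₂ n] at h
  exact (hR _ _).injective h

lemma LeftPermutive.orbitsAgreeAt_sub_one (hL : LeftPermutive N) {j : ℤ}
    (h₁ : OrbitsAgreeAt N x y j) (h₂ : OrbitsAgreeAt N x y (j + 1)) :
    OrbitsAgreeAt N x y (j - 1) := fun n => by
  have h := h₁ (n + 1)
  rw [eca_iterate_succ_apply, eca_iterate_succ_apply, h₁ n, h₂ n] at h
  exact (hL _ _).injective h

lemma eq_of_orbitsAgreeAt_zero_one (hL : LeftPermutive N) (hR : RightPermutive N)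
    (h₀ : OrbitsAgreeAt N x y 0) (h₁ : OrbitsAgreeAt N x y 1) : x = y := by
  have up : ∀ k : ℕ, OrbitsAgreeAt N x y k ∧ OrbitsAgreeAt N x y (k + 1) := by
    intro k
    induction k with
    | zero => exact ⟨h₀, h₁⟩
    | succ k ih =>
      push_cast
      exact ⟨ih.2, hR.orbitsAgreeAt_add_one (by simpa using ih.1) ih.2⟩
  have down : ∀ k : ℕ, OrbitsAgreeAt N x y (-k) ∧ OrbitsAgreeAt N x y (-k + 1) := by
    intro k
    induction k with
    | zero => exact ⟨h₀, by simpa using h₁⟩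
    | succ k ih =>
      refine ⟨?_, by simpa using ih.1⟩
      have h := hL.orbitsAgreeAt_sub_one ih.1 ih.2
      rwa [show -(k : ℤ) - 1 = -((k + 1 : ℕ) : ℤ) by push_cast; ring] at h
  funext j
  obtain ⟨k, rfl | rfl⟩ := Int.eq_nat_or_neg j
  · exact (up k).1 0
  · exact (down k).1 0

theorem posExpansiveCA_eca_of_permutive (hL : LeftPermutive N) (hR : RightPermutive N) :
    PosExpansiveCA (eca N) := by
  refine ⟨1 / 2, by norm_num, fun x y hxy => ?_⟩
  by_contra! hclose
  refine hxy (eq_of_orbitsAgreeAt_zero_one hL hR (fun n => ?_) (fun n => ?_))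
  · exact apply_eq_of_dC_lt ((hclose n).trans (by norm_num))
  · exact apply_eq_of_dC_lt ((hclose n).trans_eq (by norm_num))

end Permutive

/-- The ECA rules 90, 105 and 150 are positively expansive. -/
theorem eca_positively_expansive_rules :
    ∀ N ∈ ({90, 105, 150} : Finset ℕ), PosExpansiveCA (eca N) := by
  intro N hN
  fin_cases hN <;>
    exact posExpansiveCA_eca_of_permutive (by unfold LeftPermutive; decide)
      (by unfold RightPermutive; decide)
end

section
/- For every rule number N in the set {15, 30, 45, 51, 60, 90, 105, 106, 150, 154, 170, 204}, the elementary cellular automaton F_N is surjective. -/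
def invL (N : ℕ) (b c d : Bool) : Bool :=
  if localRule N true b c = d then true else false

def invR (N : ℕ) (a b d : Bool) : Bool :=
  if localRule N a b true = d then true else false

lemma invL_spec {N : ℕ} (h : LeftPermutive N) (b c d : Bool) :
    localRule N (invL N b c d) b c = d := by
  unfold invL
  split
  · assumption
  · obtain ⟨a, ha⟩ := (h b c).2 d
    cases a
    · exact ha
    · exact absurd ha (by assumption)

lemma invR_spec {N : ℕ} (h : RightPermutive N) (a b d : Bool) :
    localRule N a b (invR N a b d) = d := by
  unfold invR
  split
  · assumption
  · obtain ⟨c, hc⟩ := (h a b).2 d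
    cases c
    · exact hc
    · exact absurd hc (by assumption)

/-- sequence for the left-permutive construction: `seqL N y n k = x_{n+1-k}`. -/
def seqL (N : ℕ) (y : ℤ → Bool) (n : ℕ) : ℕ → Bool
  | 0 => false
  | 1 => false
  | (k+2) => invL N (seqL N y n (k+1)) (seqL N y n k) (y ((n : ℤ) - k))

/-- sequence for the right-permutive construction: `seqR N y n k = x_{k-n-1}`. -/
def seqR (N : ℕ) (y : ℤ → Bool) (n : ℕ) : ℕ → Bool
  | 0 => false
  | 1 => false
  | (k+2) => invR N (seqR N y n k) (seqR N y n (k+1)) (y ((k : ℤ) - n))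

/-- Compactness: local solvability on arbitrarily large windows gives surjectivity. -/
lemma surj_of_approx {N : ℕ}
    (h : ∀ y : ℤ → Bool, ∀ n : ℕ, ∃ x : ℤ → Bool,
      ∀ i : ℤ, i.natAbs ≤ n → eca N x i = y i) :
    Function.Surjective (eca N) := by
  intro y
  set C : ℕ → Set (ℤ → Bool) :=
    fun n => {x | ∀ i : ℤ, i.natAbs ≤ n → eca N x i = y i} with hC
  have hclosed : ∀ n, IsClosed (C n) := by
    intro n
    have : C n = ⋂ (i : ℤ), ⋂ (_ : i.natAbs ≤ n), {x | eca N x i = y i} := by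
      ext x; simp [hC, Set.mem_iInter]
    rw [this]
    refine isClosed_iInter fun i => isClosed_iInter fun _ => ?_
    have hcont : Continuous (fun x : ℤ → Bool => eca N x i) := by
      have h1 : Continuous (fun x : ℤ → Bool => (x (i - 1), x i, x (i + 1))) :=
        Continuous.prodMk (continuous_apply _)
          (Continuous.prodMk (continuous_apply _) (continuous_apply _))
      exact (continuous_of_discreteTopology
        (f := fun p : Bool × Bool × Bool => localRule N p.1 p.2.1 p.2.2)).comp h1
    exact (isClosed_singleton (x := y i)).preimage hcont
  have hmono : ∀ n, C (n + 1) ⊆ C n := by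
    intro n x hx i hi
    exact hx i (le_trans hi (Nat.le_succ n))
  have hne : ∀ n, (C n).Nonempty := fun n => h y n
  have hcomp : IsCompact (C 0) := (hclosed 0).isCompact
  obtain ⟨x, hx⟩ := IsCompact.nonempty_iInter_of_sequence_nonempty_isCompact_isClosed
    C hmono hne hcomp hclosed
  refine ⟨x, funext fun i => ?_⟩
  have := Set.mem_iInter.1 hx i.natAbs
  exact this i le_rfl

lemma leftPermutive_surj {N : ℕ} (h : LeftPermutive N) :
    Function.Surjective (eca N) := by
  apply surj_of_approx
  intro y n
  refine ⟨fun i => if i ≤ (n : ℤ) + 1 then seqL N y n ((n + 1 - i).toNat) else false,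
    fun i hi => ?_⟩
  have hi1 : -(n : ℤ) ≤ i := by omega
  have hi2 : i ≤ (n : ℤ) := by omega
  set k : ℕ := ((n : ℤ) - i).toNat with hk
  have hk0 : ((n : ℤ) + 1 - (i + 1)).toNat = k := by omega
  have hk1 : ((n : ℤ) + 1 - i).toNat = k + 1 := by omega
  have hk2 : ((n : ℤ) + 1 - (i - 1)).toNat = k + 2 := by omega
  have hki : (n : ℤ) - (k : ℤ) = i := by omega
  show localRule N _ _ _ = y i
  beta_reduce
  rw [if_pos (by omega : i - 1 ≤ (n : ℤ) + 1), if_pos (by omega : i ≤ (n : ℤ) + 1),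
    if_pos (by omega : i + 1 ≤ (n : ℤ) + 1), hk0, hk1, hk2]
  show localRule N (invL N (seqL N y n (k + 1)) (seqL N y n k) (y ((n : ℤ) - k))) _ _ = y i
  rw [invL_spec h, hki]

lemma rightPermutive_surj {N : ℕ} (h : RightPermutive N) :
    Function.Surjective (eca N) := by
  apply surj_of_approx
  intro y n
  refine ⟨fun i => if -(n : ℤ) - 1 ≤ i then seqR N y n ((i + n + 1).toNat) else false,
    fun i hi => ?_⟩
  have hi1 : -(n : ℤ) ≤ i := by omega
  have hi2 : i ≤ (n : ℤ) := by omega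
  set k : ℕ := (i + (n : ℤ)).toNat with hk
  have hk0 : (i - 1 + n + 1).toNat = k := by omega
  have hk1 : (i + n + 1).toNat = k + 1 := by omega
  have hk2 : (i + 1 + n + 1).toNat = k + 2 := by omega
  have hki : (k : ℤ) - (n : ℤ) = i := by omega
  show localRule N _ _ _ = y i
  beta_reduce
  rw [if_pos (by omega : -(n : ℤ) - 1 ≤ i - 1), if_pos (by omega : -(n : ℤ) - 1 ≤ i),
    if_pos (by omega : -(n : ℤ) - 1 ≤ i + 1), hk0, hk1, hk2]
  show localRule N _ _ (invR N (seqR N y n k) (seqR N y n (k + 1)) (y ((k : ℤ) - n))) = y i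
  rw [invR_spec h, hki]

lemma eca204_surj : Function.Surjective (eca 204) := by
  intro y
  refine ⟨y, funext fun i => ?_⟩
  have : ∀ a b c : Bool, localRule 204 a b c = b := by decide
  exact this _ _ _

lemma eca51_surj : Function.Surjective (eca 51) := by
  intro y
  refine ⟨fun i => !(y i), funext fun i => ?_⟩
  have : ∀ a b c : Bool, localRule 51 a b c = !b := by decide
  show localRule 51 _ _ _ = y i
  rw [this]
  simp

/-- The listed ECA rules are surjective. -/
theorem eca_surjective_rules :
    ∀ N ∈ ({15, 30, 45, 51, 60, 90, 105, 106, 150, 154, 170, 204} : Finset ℕ),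
      Function.Surjective (eca N) := by
  intro N hN
  fin_cases hN
  · exact leftPermutive_surj (by unfold LeftPermutive; decide)
  · exact leftPermutive_surj (by unfold LeftPermutive; decide)
  · exact leftPermutive_surj (by unfold LeftPermutive; decide)
  · exact eca51_surj
  · exact leftPermutive_surj (by unfold LeftPermutive; decide)
  · exact leftPermutive_surj (by unfold LeftPermutive; decide)
  · exact leftPermutive_surj (by unfold LeftPermutive; decide)
  · exact rightPermutive_surj (by unfold RightPermutive; decide)
  · exact leftPermutive_surj (by unfold LeftPermutive; decide)
  · exact rightPermutive_surj (by unfold RightPermutive; decide)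
  · exact rightPermutive_surj (by unfold RightPermutive; decide)
  · exact eca204_surj
end

section
/- If an elementary cellular automaton F_N is surjective, then the set of its periodic points {x ∈ X : ∃ p > 0, F_N^p(x) = x} is dense in X. -/
/-!
Every surjective ECA is left- or right-permutive or an involution (rules 51 and 204); every other
rule has an orphan word (of length at most 9), found by search.

For a left-permutive rule `F` the map on windows of width `2p + 1` that drops the first cell and
appends the cell `F^[p]` computes at the centre is injective, hence a permutation of a finite set.
Reading off its orbit through the window of `x` on `[-p, p]` gives a spatially periodic
configuration that `F^[p]` shifts by `p + 1` cells, hence an `F`-periodic point agreeing with `x`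
on `[-p, p]`. Right-permutive rules reduce to this by reflection, and `dC` is continuous for the
product topology, in which such approximations are dense.
-/

open Function Set

section CellularAutomaton

variable {α : Type*}

def globalRule (φ : α → α → α → α) (x : ℤ → α) : ℤ → α :=
  fun i => φ (x (i - 1)) (x i) (x (i + 1))

variable (φ : α → α → α → α)

theorem commute_globalRule_shift (t : ℤ) :
    Function.Commute (globalRule φ) fun x i => x (i + t) := fun x => by
  funext i
  simp only [globalRule, sub_add_eq_add_sub, add_right_comm]

theorem semiconj_reflect_globalRule :
    Semiconj (fun x i => x (-i)) (globalRule fun a b c => φ c b a) (globalRule φ) := fun x => by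
  funext i
  simp only [globalRule, neg_sub, neg_add_eq_sub, neg_add']

theorem globalRule_iterate_apply_eq_of_eqOn {i : ℤ} :
    ∀ {n : ℕ} {x y : ℤ → α}, EqOn x y (Icc (i - n) (i + n)) →
      (globalRule φ)^[n] x i = (globalRule φ)^[n] y i
  | 0, x, y, h => by simpa using h (by simp : i ∈ Icc (i - (0 : ℕ)) (i + (0 : ℕ)))
  | n + 1, x, y, h => by
    have hx : ∀ k, i - n - 1 ≤ k → k ≤ i + n + 1 → x k = y k := fun k h₁ h₂ =>
      h (by simp only [mem_Icc]; push_cast; omega)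
    have hF : EqOn (globalRule φ x) (globalRule φ y) (Icc (i - n) (i + n)) := fun j hj => by
      simp only [mem_Icc] at hj
      simp only [globalRule, hx (j - 1) (by omega) (by omega), hx j (by omega) (by omega),
        hx (j + 1) (by omega) (by omega)]
    exact globalRule_iterate_apply_eq_of_eqOn (n := n) hF

theorem apply_sub_eq_of_globalRule_iterate_apply_eq (hφ : ∀ b c, Injective (φ · b c))
    {i : ℤ} :
    ∀ {n : ℕ} {x y : ℤ → α}, EqOn x y (Ioc (i - n) (i + n)) →
      (globalRule φ)^[n] x i = (globalRule φ)^[n] y i → x (i - n) = y (i - n)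
  | 0, x, y, _, he => by simpa using he
  | n + 1, x, y, h, he => by
    have hx : ∀ k, i - n - 1 < k → k ≤ i + n + 1 → x k = y k := fun k h₁ h₂ =>
      h (by simp only [mem_Ioc]; push_cast; omega)
    have hF : EqOn (globalRule φ x) (globalRule φ y) (Ioc (i - n) (i + n)) := fun j hj => by
      simp only [mem_Ioc] at hj
      simp only [globalRule, hx (j - 1) (by omega) (by omega), hx j (by omega) (by omega),
        hx (j + 1) (by omega) (by omega)]
    have hmid := apply_sub_eq_of_globalRule_iterate_apply_eq hφ hF he
    simp only [globalRule, hx (i - n) (by omega) (by omega),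
      hx (i - n + 1) (by omega) (by omega)] at hmid
    rw [show i - ((n + 1 : ℕ) : ℤ) = i - n - 1 by push_cast; ring]
    exact hφ _ _ hmid

/-- Only cells `0, …, n` are ever read; the extension is arbitrary. -/
def extendWindow {n : ℕ} (W : Fin (n + 1) → α) : ℤ → α :=
  fun t => W ⟨min t.toNat n, by omega⟩

theorem extendWindow_natCast {n : ℕ} (W : Fin (n + 1) → α) (j : Fin (n + 1)) :
    extendWindow W (j : ℕ) = W j := by
  simp [extendWindow, min_eq_left (Fin.is_le j)]

def windowStep (p : ℕ) (W : Fin (2 * p + 1) → α) : Fin (2 * p + 1) → α :=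
  Fin.snoc (Fin.tail W) ((globalRule φ)^[p] (extendWindow W) p)

variable {φ}

theorem windowStep_injective (hφ : ∀ b c, Injective (φ · b c)) (p : ℕ) :
    Injective (windowStep φ p) := by
  intro V V' h
  obtain ⟨htail, hcenter⟩ := Fin.snoc_injective2 h
  have hext : EqOn (extendWindow V) (extendWindow V') (Ioc ((p : ℤ) - p) (p + p)) := by
    intro t ht
    simp only [mem_Ioc] at ht
    obtain ⟨m, rfl⟩ : ∃ m : ℕ, t = (m : ℤ) + 1 := ⟨(t - 1).toNat, by omega⟩
    have hm : m < 2 * p := by omega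
    rw [show (m : ℤ) + 1 = ((Fin.succ ⟨m, hm⟩ : Fin (2 * p + 1)) : ℕ) by simp,
      extendWindow_natCast, extendWindow_natCast]
    exact congrFun htail ⟨m, hm⟩
  have h0 : V 0 = V' 0 := by
    simpa [← extendWindow_natCast V 0, ← extendWindow_natCast V' 0] using
      apply_sub_eq_of_globalRule_iterate_apply_eq φ hφ hext hcenter
  rw [← Fin.cons_self_tail V, ← Fin.cons_self_tail V', h0, htail]

/-- The configuration whose window at `t` is `(e ^ t) V`, when `e` shifts windows to the left. -/
def wave {n : ℕ} (e : Equiv.Perm (Fin (n + 1) → α)) (V : Fin (n + 1) → α) : ℤ → α :=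
  fun s => (e ^ s) V 0

theorem wave_add {n : ℕ} {e : Equiv.Perm (Fin (n + 1) → α)}
    (he : ∀ W (i : Fin n), e W i.castSucc = W i.succ) (V : Fin (n + 1) → α) (t : ℤ)
    (j : Fin (n + 1)) : wave e V (t + (j : ℕ)) = (e ^ t) V j := by
  induction j using Fin.induction generalizing t with
  | zero => simp [wave]
  | succ i ih =>
    rw [← he ((e ^ t) V) i, ← Equiv.Perm.mul_apply, ← zpow_one_add, ← ih]
    simp only [Fin.val_succ, Fin.val_castSucc]
    push_cast
    ring_nf

theorem wave_zpow_apply {n : ℕ} (e : Equiv.Perm (Fin (n + 1) → α)) (V : Fin (n + 1) → α)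
    (k s : ℤ) : wave e ((e ^ k) V) s = wave e V (s + k) := by
  simp [wave, zpow_add, Equiv.Perm.mul_apply]

variable [Finite α]

noncomputable def windowPerm (hφ : ∀ b c, Injective (φ · b c)) (p : ℕ) :
    Equiv.Perm (Fin (2 * p + 1) → α) :=
  Equiv.ofBijective _ (Finite.injective_iff_bijective.mp (windowStep_injective hφ p))

theorem windowPerm_apply_castSucc (hφ : ∀ b c, Injective (φ · b c)) (p : ℕ) (W)
    (i : Fin (2 * p)) :
    windowPerm hφ p W i.castSucc = W i.succ := by
  simp [windowPerm, windowStep, Fin.tail]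

theorem windowPerm_apply_last (hφ : ∀ b c, Injective (φ · b c)) (p : ℕ) (W) :
    windowPerm hφ p W (Fin.last _) = (globalRule φ)^[p] (extendWindow W) p := by
  simp [windowPerm, windowStep]

/-- `F^[p]` moves the wave `p + 1` cells to the left. -/
theorem globalRule_iterate_wave (hφ : ∀ b c, Injective (φ · b c)) (p : ℕ)
    (V : Fin (2 * p + 1) → α) :
    (globalRule φ)^[p] (wave (windowPerm hφ p) V) =
      wave (windowPerm hφ p) ((windowPerm hφ p ^ (p + 1 : ℤ)) V) := by
  set e := windowPerm hφ p
  have hwindow : ∀ (t : ℤ) (j : Fin (2 * p + 1)), wave e V (t + (j : ℕ)) = (e ^ t) V j :=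
    wave_add (windowPerm_apply_castSucc hφ p) V
  funext s
  obtain ⟨t, rfl⟩ : ∃ t : ℤ, s = p + t := ⟨s - p, by ring⟩
  have hlocal : EqOn (fun i => wave e V (i + t)) (extendWindow ((e ^ t) V))
      (Icc ((p : ℤ) - p) (p + p)) := by
    intro i hi
    simp only [mem_Icc] at hi
    obtain ⟨j, rfl⟩ : ∃ j : Fin (2 * p + 1), i = (j : ℕ) :=
      ⟨⟨i.toNat, by omega⟩, by simp; omega⟩
    show wave e V ((j : ℕ) + t) = extendWindow ((e ^ t) V) (j : ℕ)
    rw [extendWindow_natCast, add_comm, hwindow]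
  calc (globalRule φ)^[p] (wave e V) (p + t)
      = (globalRule φ)^[p] (fun i => wave e V (i + t)) p :=
        (congrFun ((commute_globalRule_shift φ t).iterate_left p (wave e V)) p).symm
    _ = e ((e ^ t) V) (Fin.last _) := by
        rw [globalRule_iterate_apply_eq_of_eqOn φ hlocal, windowPerm_apply_last]
    _ = wave e V (t + 1 + (2 * p : ℕ)) := by
        rw [← Equiv.Perm.mul_apply, ← zpow_one_add, add_comm 1 t, ← hwindow, Fin.val_last]
    _ = wave e ((e ^ (p + 1 : ℤ)) V) (p + t) := by
        rw [wave_zpow_apply]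
        congr 1
        push_cast
        ring

theorem wave_mem_periodicPts (hφ : ∀ b c, Injective (φ · b c)) {p : ℕ} (hp : 0 < p)
    (V : Fin (2 * p + 1) → α) : wave (windowPerm hφ p) V ∈ periodicPts (globalRule φ) := by
  set e := windowPerm hφ p
  have hsemi : Semiconj (wave e) ⇑(e ^ (p + 1 : ℤ)) (globalRule φ)^[p] := fun W =>
    (globalRule_iterate_wave hφ p W).symm
  refine ⟨p * orderOf e, Nat.mul_pos hp (orderOf_pos e), ?_⟩
  rw [IsPeriodicPt, IsFixedPt, iterate_mul, ← hsemi.iterate_right, Equiv.Perm.iterate_eq_pow,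
    ← zpow_natCast, ← zpow_mul, zpow_mul', zpow_natCast, pow_orderOf_eq_one, one_zpow]
  rfl

theorem exists_mem_periodicPts_eqOn_of_leftPermutive (hφ : ∀ b c, Injective (φ · b c))
    (x : ℤ → α) (p : ℕ) : ∃ y ∈ periodicPts (globalRule φ), EqOn x y (Icc (-p) p) := by
  set e := windowPerm hφ (p + 1)
  set V : Fin (2 * (p + 1) + 1) → α := fun j => x (j - (p + 1 : ℕ))
  refine ⟨wave e ((e ^ (p + 1 : ℕ)) V), wave_mem_periodicPts hφ p.succ_pos _, fun i hi => ?_⟩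
  simp only [mem_Icc] at hi
  obtain ⟨j, rfl⟩ : ∃ j : Fin (2 * (p + 1) + 1), i = (j : ℕ) - (p + 1 : ℕ) :=
    ⟨⟨(i + p + 1).toNat, by omega⟩, by simp; omega⟩
  rw [← zpow_natCast, wave_zpow_apply, sub_add_cancel, ← zero_add ((j : ℕ) : ℤ),
    wave_add (windowPerm_apply_castSucc hφ _), zpow_zero, Equiv.Perm.one_apply, zero_add]

theorem exists_mem_periodicPts_eqOn_of_rightPermutive (hφ : ∀ a b, Injective (φ a b))
    (x : ℤ → α) (p : ℕ) : ∃ y ∈ periodicPts (globalRule φ), EqOn x y (Icc (-p) p) := by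
  obtain ⟨y, hy, hxy⟩ := exists_mem_periodicPts_eqOn_of_leftPermutive
    (φ := fun a b c => φ c b a) (fun b c => hφ c b) (fun i => x (-i)) p
  refine ⟨fun i => y (-i), (semiconj_reflect_globalRule φ).mapsTo_periodicPts hy,
    fun i hi => ?_⟩
  simpa using hxy (show -i ∈ Icc (-(p : ℤ)) p by simp only [mem_Icc] at hi ⊢; omega)

end CellularAutomaton

theorem dense_of_forall_exists_eqOn_Icc {α : Type*} [TopologicalSpace α] {S : Set (ℤ → α)}
    (h : ∀ (x : ℤ → α) (p : ℕ), ∃ y ∈ S, EqOn x y (Icc (-p) p)) : Dense S := by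
  refine dense_iff_inter_open.mpr fun U hU ⟨x, hx⟩ => ?_
  obtain ⟨I, u, hu, hIU⟩ := isOpen_pi_iff.mp hU x hx
  obtain ⟨y, hyS, hxy⟩ := h x (I.sup Int.natAbs)
  refine ⟨y, hIU fun i hi => ?_, hyS⟩
  have hi' : i.natAbs ≤ I.sup Int.natAbs := Finset.le_sup (f := Int.natAbs) hi
  rw [← hxy (show i ∈ Icc _ _ by simp only [mem_Icc]; omega)]
  exact (hu i hi).2

theorem continuous_dC (x : ℤ → Bool) : Continuous (dC x) := by
  have hsum : Summable fun i : ℤ => (1 / 2 : ℝ) ^ i.natAbs :=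
    .of_nat_of_neg (by simpa using summable_geometric_two) (by simpa using summable_geometric_two)
  refine continuous_tsum (fun i => ?_) hsum fun i y => ?_
  · exact (continuous_of_discreteTopology
      (f := fun b : Bool => if x i = b then (0 : ℝ) else (1 / 2) ^ i.natAbs)).comp
      (continuous_apply i)
  · split_ifs <;> simp

theorem Dense.exists_dC_lt {S : Set (ℤ → Bool)} (hS : Dense S) (x : ℤ → Bool) {δ : ℝ}
    (hδ : 0 < δ) : ∃ y ∈ S, dC x y < δ := by
  obtain ⟨y, hyδ, hyS⟩ :=
    hS.inter_open_nonempty _ (isOpen_lt (continuous_dC x) continuous_const)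
      ⟨x, by simpa [dC] using hδ⟩
  exact ⟨y, hyS, hyδ⟩

theorem Function.Involutive.dense_periodicPts {β : Type*} [TopologicalSpace β] {f : β → β}
    (hf : Involutive f) : Dense (periodicPts f) := by
  rw [eq_univ_of_forall fun x => mk_mem_periodicPts two_pos (hf x)]
  exact dense_univ

theorem dense_periodicPts_of_leftPermutive {N : ℕ} (h : LeftPermutive N) :
    Dense (periodicPts (eca N)) :=
  dense_of_forall_exists_eqOn_Icc
    (exists_mem_periodicPts_eqOn_of_leftPermutive fun b c => (h b c).injective)

theorem dense_periodicPts_of_rightPermutive {N : ℕ} (h : RightPermutive N) :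
    Dense (periodicPts (eca N)) :=
  dense_of_forall_exists_eqOn_Icc
    (exists_mem_periodicPts_eqOn_of_rightPermutive fun a b => (h a b).injective)

theorem involutive_eca_51 : Involutive (eca 51) := fun x => by
  have hr : ∀ a b c, localRule 51 a b c = !b := by decide
  funext i
  simp [eca, hr]

theorem involutive_eca_204 : Involutive (eca 204) := fun x => by
  have hr : ∀ a b c, localRule 204 a b c = b := by decide
  funext i
  simp [eca, hr]

/-- One step of the subset construction: after reading a word, the state holds at `(b, c)` when
some preimage of the word ends in the cells `b, c`. -/
def readCell (N : ℕ) (s : Bool → Bool → Bool) (o : Bool) : Bool → Bool → Bool :=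
  fun b c => (s false b && localRule N false b c == o) || (s true b && localRule N true b c == o)

def IsOrphan (N : ℕ) (w : List Bool) : Prop :=
  ∀ b c, w.foldl (readCell N) (fun _ _ => true) b c = false

instance (N : ℕ) : DecidablePred (IsOrphan N) := fun _ => by
  unfold IsOrphan; infer_instance

instance : DecidablePred LeftPermutive := fun N =>
  inferInstanceAs (Decidable (∀ b c : Bool, Bijective fun a => localRule N a b c))

instance : DecidablePred RightPermutive := fun N =>
  inferInstanceAs (Decidable (∀ a b : Bool, Bijective fun c => localRule N a b c))

theorem foldl_readCell_apply {N : ℕ} {x : ℤ → Bool} :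
    ∀ (w : List Bool) (s : Bool → Bool → Bool) (t : ℤ), s (x (t - 1)) (x t) = true →
      (∀ (k : ℕ) (hk : k < w.length), eca N x (t + k) = w[k]) →
      w.foldl (readCell N) s (x (t + w.length - 1)) (x (t + w.length)) = true
  | [], s, t, hs, _ => by simpa using hs
  | o :: w, s, t, hs, hw => by
    have hstep : readCell N s o (x t) (x (t + 1)) = true := by
      have := hw 0 (by simp)
      cases h : x (t - 1) <;> simp_all [readCell, eca]
    have := foldl_readCell_apply w (readCell N s o) (t + 1) (by simpa using hstep)
      fun k hk => by
        rw [show t + 1 + (k : ℤ) = t + (k + 1 : ℕ) by push_cast; ring, hw (k + 1) (by simpa),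
          List.getElem_cons_succ]
    simpa [add_assoc, add_comm (1 : ℤ)] using this

theorem not_surjective_of_isOrphan {N : ℕ} {w : List Bool} (hw : IsOrphan N w) :
    ¬ Surjective (eca N) := fun hs => by
  obtain ⟨x, hx⟩ := hs fun i => w.getD i.toNat false
  have := foldl_readCell_apply (N := N) (x := x) w (fun _ _ => true) 0 rfl fun k hk => by
    simp [hx, hk]
  simp [hw _ _] at this

theorem leftPermutive_or_rightPermutive_or_involutive_or_exists_isOrphan {N : ℕ}
    (hN : N ≤ 255) :
    LeftPermutive N ∨ RightPermutive N ∨ Involutive (eca N) ∨ ∃ w, IsOrphan N w := by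
  have key : ∀ N < 256, LeftPermutive N ∨ RightPermutive N ∨ N = 51 ∨ N = 204 ∨
      ∃ n < 10, ∃ w ∈ (List.replicate n [false, true]).sections, IsOrphan N w := by
    decide +kernel
  rcases key N (by omega) with h | h | rfl | rfl | ⟨-, -, w, -, hw⟩
  exacts [.inl h, .inr (.inl h), .inr (.inr (.inl involutive_eca_51)),
    .inr (.inr (.inl involutive_eca_204)), .inr (.inr (.inr ⟨w, hw⟩))]

/-- If an elementary cellular automaton is surjective, then its set of periodic points
is dense in `X` (with respect to the Cantor metric). -/
theorem eca_surjective_dense_periodic_points (N : ℕ) (hN : N ≤ 255)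
    (h : Function.Surjective (eca N)) :
    ∀ x : ℤ → Bool, ∀ δ : ℝ, 0 < δ →
      ∃ y : ℤ → Bool, (∃ p : ℕ, 0 < p ∧ (eca N)^[p] y = y) ∧ dC x y < δ := by
  have hdense : Dense (periodicPts (eca N)) := by
    rcases leftPermutive_or_rightPermutive_or_involutive_or_exists_isOrphan hN with
      hl | hr | hi | ⟨w, hw⟩
    · exact dense_periodicPts_of_leftPermutive hl
    · exact dense_periodicPts_of_rightPermutive hr
    · exact hi.dense_periodicPts
    · exact absurd h (not_surjective_of_isOrphan hw)
  exact fun x δ hδ => hdense.exists_dC_lt x hδ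
end

section
/- For every rule number N in the set {15, 30, 45, 60, 90, 105, 106, 150, 154, 170}, the elementary cellular automaton F_N is chaotic in the sense of Devaney: F_N is sensitive, topologically transitive, and its set of periodic points {x ∈ X : ∃ p > 0, F_N^p(x) = x} is dense in X. -/
namespace CAwork


lemma sum_pow_natAbs_le (k : ℕ) (S : Finset ℤ) (hS : ∀ i ∈ S, k ≤ i.natAbs) :
    ∑ i ∈ S, ((1:ℝ)/2) ^ i.natAbs ≤ 4 * (1/2) ^ k := by
  classical
  have hsplit := Finset.sum_filter_add_sum_filter_not S (fun i => 0 ≤ i)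
      (fun i => ((1:ℝ)/2) ^ i.natAbs)
  have key : ∀ T : Finset ℤ, (∀ i ∈ T, ∀ j ∈ T, i.natAbs = j.natAbs → i = j) →
      (∀ i ∈ T, k ≤ i.natAbs) → ∑ i ∈ T, ((1:ℝ)/2) ^ i.natAbs ≤ 2 * (1/2) ^ k := by
    intro T hinj hk
    have himg := Finset.sum_image (f := fun n : ℕ => ((1:ℝ)/2)^n) (g := Int.natAbs) (s := T) hinj
    rw [← himg]
    set T' := T.image Int.natAbs with hT'
    have hsub : T' ⊆ Finset.Ico k ((T'.sup id) + 1) := by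
      intro n hn
      simp only [Finset.mem_Ico]
      constructor
      · obtain ⟨i, hi, rfl⟩ := Finset.mem_image.mp hn
        exact hk i hi
      · exact Nat.lt_succ_of_le (Finset.le_sup (f := id) hn)
    calc ∑ n ∈ T', ((1:ℝ)/2)^n ≤ ∑ n ∈ Finset.Ico k ((T'.sup id) + 1), ((1:ℝ)/2)^n := by
          apply Finset.sum_le_sum_of_subset_of_nonneg hsub
          intro i _ _; positivity
      _ ≤ ((1:ℝ)/2)^k / (1 - 1/2) := geom_sum_Ico_le_of_lt_one (by norm_num) (by norm_num)
      _ = 2 * (1/2)^k := by ring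
  have h1 : ∑ i ∈ S.filter (fun i => 0 ≤ i), ((1:ℝ)/2) ^ i.natAbs ≤ 2 * (1/2)^k := by
    apply key
    · intro i hi j hj hij
      have hi' := (Finset.mem_filter.mp hi).2
      have hj' := (Finset.mem_filter.mp hj).2
      omega
    · intro i hi; exact hS i (Finset.mem_filter.mp hi).1
  have h2 : ∑ i ∈ S.filter (fun i => ¬ 0 ≤ i), ((1:ℝ)/2) ^ i.natAbs ≤ 2 * (1/2)^k := by
    apply key
    · intro i hi j hj hij
      have hi' := (Finset.mem_filter.mp hi).2
      have hj' := (Finset.mem_filter.mp hj).2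
      omega
    · intro i hi; exact hS i (Finset.mem_filter.mp hi).1
  nlinarith [h1, h2]

lemma dC_term_nonneg (x y : ℤ → Bool) (i : ℤ) :
    (0:ℝ) ≤ if x i = y i then 0 else (1 / 2 : ℝ) ^ i.natAbs := by
  split <;> positivity

lemma dC_summable (x y : ℤ → Bool) :
    Summable (fun i : ℤ => if x i = y i then 0 else (1 / 2 : ℝ) ^ i.natAbs) := by
  apply summable_of_sum_le (c := 4 * (1/2)^(0:ℕ)) (fun i => dC_term_nonneg x y i)
  intro S
  calc ∑ i ∈ S, (if x i = y i then 0 else (1 / 2 : ℝ) ^ i.natAbs)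
      ≤ ∑ i ∈ S, ((1:ℝ)/2) ^ i.natAbs := by
        apply Finset.sum_le_sum
        intro i _
        split
        · positivity
        · norm_num
    _ ≤ 4 * (1/2)^(0:ℕ) := sum_pow_natAbs_le 0 S (fun i _ => Nat.zero_le _)

lemma dC_le_of_agree (k : ℕ) (x y : ℤ → Bool) (h : ∀ i : ℤ, i.natAbs ≤ k → x i = y i) :
    dC x y ≤ 4 * (1/2) ^ (k+1) := by
  apply Summable.tsum_le_of_sum_le (dC_summable x y)
  intro S
  calc ∑ i ∈ S, (if x i = y i then 0 else (1 / 2 : ℝ) ^ i.natAbs)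
      ≤ ∑ i ∈ S, (if k + 1 ≤ i.natAbs then ((1:ℝ)/2) ^ i.natAbs else 0) := by
        apply Finset.sum_le_sum
        intro i _
        by_cases hik : k + 1 ≤ i.natAbs
        · simp only [if_pos hik]
          split
          · positivity
          · norm_num
        · simp only [if_neg hik]
          rw [if_pos (h i (by omega))]
    _ = ∑ i ∈ S.filter (fun i => k + 1 ≤ i.natAbs), ((1:ℝ)/2) ^ i.natAbs :=
        (Finset.sum_filter _ _).symm
    _ ≤ 4 * (1/2) ^ (k+1) := by
        apply sum_pow_natAbs_le
        intro i hi
        exact (Finset.mem_filter.mp hi).2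

lemma single_le_dC {x y : ℤ → Bool} (j : ℤ) (h : x j ≠ y j) :
    ((1:ℝ)/2) ^ j.natAbs ≤ dC x y := by
  have hle := Summable.le_tsum (dC_summable x y) j (fun b _ => dC_term_nonneg x y b)
  rw [if_neg h] at hle
  exact hle

lemma dC_update_le (x : ℤ → Bool) (j : ℤ) (c : Bool) :
    dC x (Function.update x j c) ≤ ((1:ℝ)/2) ^ j.natAbs := by
  apply Summable.tsum_le_of_sum_le (dC_summable _ _)
  intro S
  calc ∑ i ∈ S, (if x i = Function.update x j c i then 0 else (1 / 2 : ℝ) ^ i.natAbs)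
      ≤ ∑ i ∈ S, (if i = j then ((1:ℝ)/2) ^ j.natAbs else 0) := by
        apply Finset.sum_le_sum
        intro i _
        by_cases hij : i = j
        · subst hij
          simp only [if_pos rfl]
          split
          · positivity
          · norm_num
        · rw [Function.update_of_ne hij, if_pos rfl, if_neg hij]
    _ = if j ∈ S then ((1:ℝ)/2) ^ j.natAbs else 0 := Finset.sum_ite_eq' S j _
    _ ≤ ((1:ℝ)/2) ^ j.natAbs := by
        split
        · exact le_refl _
        · positivity

lemma exists_small (δ : ℝ) (hδ : 0 < δ) : ∃ k : ℕ, 4 * ((1:ℝ)/2) ^ (k+1) < δ := by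
  obtain ⟨k, hk⟩ := exists_pow_lt_of_lt_one (show (0:ℝ) < δ/4 by linarith)
    (show (1:ℝ)/2 < 1 by norm_num)
  refine ⟨k, ?_⟩
  have h2 : ((1:ℝ)/2) ^ (k+1) ≤ ((1:ℝ)/2)^k := by
    apply pow_le_pow_of_le_one <;> norm_num
  linarith



/-- `F^[n] x j` only depends on `x` on `[j-n, j+n]`. -/
lemma iter_agree (N : ℕ) : ∀ (n : ℕ) (x y : ℤ → Bool) (j : ℤ),
    (∀ i, j - n ≤ i → i ≤ j + n → x i = y i) → (eca N)^[n] x j = (eca N)^[n] y j := by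
  intro n
  induction n with
  | zero =>
    intro x y j h
    simpa using h j (by simp) (by simp)
  | succ n ih =>
    intro x y j h
    rw [Function.iterate_succ_apply, Function.iterate_succ_apply]
    apply ih
    intro i hi1 hi2
    have h1 := h (i-1) (by push_cast at hi1 hi2 ⊢; omega) (by push_cast at hi1 hi2 ⊢; omega)
    have h2 := h i (by push_cast at hi1 hi2 ⊢; omega) (by push_cast at hi1 hi2 ⊢; omega)
    have h3 := h (i+1) (by push_cast at hi1 hi2 ⊢; omega) (by push_cast at hi1 hi2 ⊢; omega)
    simp [eca, h1, h2, h3]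

section Right

variable {N : ℕ}

/-- Right-permutivity propagates a difference at the right edge to the center. -/
lemma iter_flip_right (hinj : ∀ a b c c', localRule N a b c = localRule N a b c' → c = c') :
    ∀ (n : ℕ) (x y : ℤ → Bool) (j : ℤ),
    (∀ i, i < j + n → x i = y i) → x (j + n) ≠ y (j + n) →
    (eca N)^[n] x j ≠ (eca N)^[n] y j := by
  intro n
  induction n with
  | zero =>
    intro x y j h hne
    simpa using hne
  | succ n ih =>
    intro x y j h hne
    rw [Function.iterate_succ_apply, Function.iterate_succ_apply]
    apply ih
    · intro i hi
      have h1 := h (i-1) (by push_cast at hi ⊢; omega)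
      have h2 := h i (by push_cast at hi ⊢; omega)
      have h3 := h (i+1) (by push_cast at hi ⊢; omega)
      simp [eca, h1, h2, h3]
    · show eca N x (j + n) ≠ eca N y (j + n)
      have h1 := h (j + n - 1) (by push_cast; omega)
      have h2 := h (j + n) (by push_cast; omega)
      have hne' : x (j + n + 1) ≠ y (j + n + 1) := by
        have : j + ((n : ℤ) + 1) = j + n + 1 := by ring
        rw [← this]
        push_cast at hne
        convert hne using 3 <;> omega
      simp only [eca, h1, h2]
      intro hcontra
      exact hne' (hinj _ _ _ _ hcontra)

/-- One can realize any value at the center after `n` steps by updating cell `j+n`. -/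
lemma iter_solve_right (hsurj : ∀ a b d, ∃ c, localRule N a b c = d) :
    ∀ (n : ℕ) (z : ℤ → Bool) (j : ℤ) (b : Bool),
    ∃ c, (eca N)^[n] (Function.update z (j + n) c) j = b := by
  intro n
  induction n with
  | zero =>
    intro z j b
    refine ⟨b, ?_⟩
    simp
  | succ n ih =>
    intro z j b
    obtain ⟨c', hc'⟩ := ih (eca N z) j b
    obtain ⟨c, hc⟩ := hsurj (z (j + n - 1)) (z (j + n)) c'
    refine ⟨c, ?_⟩
    rw [Function.iterate_succ_apply]
    have hagree : ∀ i, j - (n:ℤ) ≤ i → i ≤ j + (n:ℤ) →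
        eca N (Function.update z (j + ((n:ℕ)+1 : ℕ)) c) i
          = Function.update (eca N z) (j + n) c' i := by
      intro i hi1 hi2
      have hcast : (((n:ℕ)+1 : ℕ) : ℤ) = (n:ℤ) + 1 := by push_cast; ring
      by_cases hij : i = j + n
      · subst hij
        rw [Function.update_self]
        show localRule N (Function.update z (j + ((n:ℕ)+1 : ℕ)) c (j + n - 1))
          (Function.update z (j + ((n:ℕ)+1 : ℕ)) c (j + n))
          (Function.update z (j + ((n:ℕ)+1 : ℕ)) c (j + n + 1)) = c'
        rw [Function.update_of_ne (by rw [hcast]; omega),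
            Function.update_of_ne (by rw [hcast]; omega)]
        have : j + n + 1 = j + ((n:ℕ)+1 : ℕ) := by rw [hcast]; ring
        rw [this, Function.update_self]
        exact hc
      · rw [Function.update_of_ne hij]
        show localRule N (Function.update z (j + ((n:ℕ)+1 : ℕ)) c (i - 1))
          (Function.update z (j + ((n:ℕ)+1 : ℕ)) c i)
          (Function.update z (j + ((n:ℕ)+1 : ℕ)) c (i + 1)) = eca N z i
        rw [Function.update_of_ne (by rw [hcast]; omega),
            Function.update_of_ne (by rw [hcast]; omega),
            Function.update_of_ne (by rw [hcast]; omega)]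
        rfl
    rw [iter_agree N n _ _ j hagree]
    exact hc'

/-- Build a configuration agreeing with `z` to the left and hitting prescribed
values of `y` under `F^[n]` on a block of `m` consecutive cells. -/
lemma build_right (hsurj : ∀ a b d, ∃ c, localRule N a b c = d)
    (n : ℕ) (y : ℤ → Bool) :
    ∀ (m : ℕ) (z : ℤ → Bool) (j₀ : ℤ),
    ∃ z', (∀ i, i < j₀ + n → z' i = z i) ∧
      (∀ j, j₀ ≤ j → j < j₀ + m → (eca N)^[n] z' j = y j) := by
  intro m
  induction m with
  | zero =>
    intro z j₀
    exact ⟨z, fun _ _ => rfl, fun j h1 h2 => by push_cast at h2; omega⟩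
  | succ m ih =>
    intro z j₀
    obtain ⟨z'', h1, h2⟩ := ih z j₀
    obtain ⟨c, hc⟩ := iter_solve_right hsurj n z'' (j₀ + m) (y (j₀ + m))
    refine ⟨Function.update z'' (j₀ + (m:ℤ) + n) c, ?_, ?_⟩
    · intro i hi
      rw [Function.update_of_ne (by omega)]
      exact h1 i hi
    · intro j hj1 hj2
      by_cases hj : j = j₀ + m
      · subst hj
        exact hc
      · have hj2' : j < j₀ + m := by push_cast at hj2; omega
        rw [iter_agree N n _ z'' j (fun i hi1 hi2 => Function.update_of_ne (by omega) _ _)]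
        exact h2 j hj1 hj2'

end Right



variable {N : ℕ}

lemma sens_right (hinj : ∀ a b c c', localRule N a b c = localRule N a b c' → c = c') :
    SensitiveCA (eca N) := by
  refine ⟨1, one_pos, ?_⟩
  intro x δ hδ
  obtain ⟨m, hm⟩ := exists_pow_lt_of_lt_one hδ (show (1:ℝ)/2 < 1 by norm_num)
  set y := Function.update x (m : ℤ) (!(x (m : ℤ))) with hy
  have hdxy : dC x y < δ := by
    have := dC_update_le x (m : ℤ) (!(x (m : ℤ)))
    simp only [Int.natAbs_natCast] at this
    exact lt_of_le_of_lt this hm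
  refine ⟨y, hdxy, m, ?_⟩
  have hne : (eca N)^[m] x 0 ≠ (eca N)^[m] y 0 := by
    apply iter_flip_right hinj m x y 0
    · intro i hi
      rw [hy, Function.update_of_ne (by omega)]
    · rw [hy]
      have h0 : (0:ℤ) + (m:ℤ) = (m:ℤ) := by ring
      rw [h0, Function.update_self]
      simp
  have := single_le_dC 0 hne
  simpa using this

lemma trans_right (hsurj : ∀ a b d, ∃ c, localRule N a b c = d) :
    TransitiveCA (eca N) := by
  rintro U V hU hV ⟨x, hxU⟩ ⟨y, hyV⟩
  obtain ⟨δ₁, hδ₁, hU'⟩ := hU x hxU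
  obtain ⟨δ₂, hδ₂, hV'⟩ := hV y hyV
  obtain ⟨k, hk⟩ := exists_small (min δ₁ δ₂) (lt_min hδ₁ hδ₂)
  set n := 2*k + 1 with hn
  obtain ⟨z, hz1, hz2⟩ := build_right hsurj n y (2*k+1) x (-(k:ℤ))
  have hzU : z ∈ U := by
    apply hU'
    apply lt_of_le_of_lt _ (lt_of_lt_of_le hk (min_le_left _ _))
    apply dC_le_of_agree k
    intro i hi
    exact (hz1 i (by push_cast; omega)).symm
  have hzV : (eca N)^[n] z ∈ V := by
    apply hV'
    apply lt_of_le_of_lt _ (lt_of_lt_of_le hk (min_le_right _ _))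
    apply dC_le_of_agree k
    intro i hi
    exact (hz2 i (by push_cast; omega) (by push_cast; omega)).symm
  exact ⟨n, by omega, ⟨(eca N)^[n] z, ⟨z, hzU, rfl⟩, hzV⟩⟩



variable {N : ℕ}

lemma eca_shift (q : ℤ) (z : ℤ → Bool) : eca N (shiftBy q z) = shiftBy q (eca N z) := by
  funext i
  show localRule N (z (i - 1 + q)) (z (i + q)) (z (i + 1 + q))
      = localRule N (z (i + q - 1)) (z (i + q)) (z (i + q + 1))
  have e1 : i - 1 + q = i + q - 1 := by ring
  have e2 : i + 1 + q = i + q + 1 := by ring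
  rw [e1, e2]

lemma iter_shift (n : ℕ) (q : ℤ) (z : ℤ → Bool) :
    (eca N)^[n] (shiftBy q z) = shiftBy q ((eca N)^[n] z) := by
  induction n with
  | zero => rfl
  | succ n ih =>
    rw [Function.iterate_succ_apply', Function.iterate_succ_apply', ih, eca_shift]

/-- The key periodic-point construction for right-permutive rules. -/
lemma dpo_right (hsurj : ∀ a b d, ∃ c, localRule N a b c = d)
    (x : ℤ → Bool) (δ : ℝ) (hδ : 0 < δ) :
    ∃ y : ℤ → Bool, (∃ p : ℕ, 0 < p ∧ (eca N)^[p] y = y) ∧ dC x y < δ := by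
  classical
  obtain ⟨k, hk⟩ := exists_small δ hδ
  set t := 2*k + 2 with ht
  choose csolve hcsolve using hsurj
  -- the block map
  set Φ : (Fin (t+1) → Bool) → (Fin (t+1) → Bool) := fun C j =>
    if h : (j : ℕ) < t then C ⟨(j:ℕ)+1, by omega⟩
    else csolve (C ⟨t-1, by omega⟩) (C ⟨t, by omega⟩) (C ⟨0, by omega⟩) with hΦ
  have hΦtail : ∀ C (jv : ℕ) (hj : jv < t),
      Φ C ⟨jv, by omega⟩ = C ⟨jv + 1, by omega⟩ := by
    intro C jv hj
    simp only [hΦ, dif_pos hj]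
  have hΦrule : ∀ C, localRule N (C ⟨t-1, by omega⟩) (C ⟨t, by omega⟩)
      (Φ C ⟨t, by omega⟩) = C ⟨0, by omega⟩ := by
    intro C
    have : Φ C ⟨t, by omega⟩ = csolve (C ⟨t-1, by omega⟩) (C ⟨t, by omega⟩) (C ⟨0, by omega⟩) := by
      simp only [hΦ, dif_neg (lt_irrefl t)]
    rw [this]
    exact hcsolve _ _ _
  have hΦinj : Function.Injective Φ := by
    intro C C' hCC
    have htail : ∀ (jv : ℕ) (hjle : jv ≤ t) (hj1 : 1 ≤ jv), C ⟨jv, by omega⟩ = C' ⟨jv, by omega⟩ := by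
      intro jv hj h1
      have := congrFun hCC ⟨jv - 1, by omega⟩
      rw [hΦtail C (jv-1) (by omega), hΦtail C' (jv-1) (by omega)] at this
      have hfix : jv - 1 + 1 = jv := by omega
      simpa [hfix] using this
    have hhead : C ⟨0, by omega⟩ = C' ⟨0, by omega⟩ := by
      have h1 := hΦrule C
      have h2 := hΦrule C'
      rw [htail (t-1) (by omega) (by omega), htail t (by omega) (by omega),
          congrFun hCC ⟨t, by omega⟩] at h1
      exact h1.symm.trans h2
    funext j
    rcases j with ⟨jv, hj⟩
    rcases Nat.eq_zero_or_pos jv with h0 | h1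
    · subst h0; exact hhead
    · exact htail jv (by omega) h1
  have hΦbij : Function.Bijective Φ := Finite.injective_iff_bijective.mp hΦinj
  set φ : Equiv.Perm (Fin (t+1) → Bool) := Equiv.ofBijective Φ hΦbij with hφ
  have hφapp : ∀ C, φ C = Φ C := fun C => rfl
  set B : Fin (t+1) → Bool := fun j => x ((j:ℤ) - ((k:ℤ)+1)) with hB
  set Y : ℤ → Bool := fun i => (φ ^ i) B ⟨0, by omega⟩ with hY
  have hstep : ∀ i : ℤ, (φ ^ (i+1)) B = Φ ((φ ^ i) B) := by
    intro i
    have : φ ^ (i + 1) = φ * φ ^ i := by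
      rw [show i + 1 = 1 + i by ring, zpow_add, zpow_one]
    rw [this, Equiv.Perm.mul_apply, hφapp]
  have hcoord : ∀ (jv : ℕ) (hj : jv ≤ t) (i : ℤ),
      (φ ^ i) B ⟨jv, by omega⟩ = Y (i + jv) := by
    intro jv
    induction jv with
    | zero =>
      intro _ i
      simp only [hY, Nat.cast_zero, add_zero]
    | succ jv ih =>
      intro hj i
      have h1 : (φ ^ (i+1)) B ⟨jv, by omega⟩ = (φ ^ i) B ⟨jv + 1, by omega⟩ :=
        (hstep i) ▸ hΦtail ((φ ^ i) B) jv (by omega)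
      rw [← h1, ih (by omega) (i+1)]
      congr 1
      push_cast
      ring
  have heq : ∀ m : ℤ, eca N Y m = Y (m - t) := by
    intro m
    have hr := hΦrule ((φ ^ (m - t)) B)
    rw [← hstep (m - t)] at hr
    rw [hcoord (t-1) (by omega) (m-t), hcoord t (by omega) (m-t), hcoord t (by omega) (m-t+1),
        hcoord 0 (by omega) (m-t)] at hr
    have e0 : m - t + ((0:ℕ):ℤ) = m - t := by push_cast; ring
    have e1 : m - t + ((t-1:ℕ):ℤ) = m - 1 := by
      have : ((t-1:ℕ):ℤ) = (t:ℤ) - 1 := by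
        have h2t : 1 ≤ t := by omega
        push_cast [h2t]
        ring
      rw [this]; ring
    have e2 : m - t + ((t:ℕ):ℤ) = m := by ring
    have e3 : m - t + 1 + ((t:ℕ):ℤ) = m + 1 := by ring
    rw [e0, e1, e2, e3] at hr
    show localRule N (Y (m-1)) (Y m) (Y (m+1)) = Y (m - t)
    exact hr
  have hecaY : eca N Y = shiftBy (-(t:ℤ)) Y := by
    funext m
    rw [heq m]
    show Y (m - t) = Y (m + -(t:ℤ))
    rfl
  have hiterY : ∀ n : ℕ, (eca N)^[n] Y = shiftBy (-((n:ℤ)*t)) Y := by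
    intro n
    induction n with
    | zero =>
      funext i
      simp [shiftBy]
    | succ n ih =>
      rw [Function.iterate_succ_apply, hecaY, iter_shift, ih]
      funext i
      simp only [shiftBy]
      congr 1
      push_cast
      ring
  -- pigeonhole for periodicity
  obtain ⟨a, b, hab, he⟩ := Finite.exists_ne_map_eq_of_infinite (fun i : ℤ => (φ ^ i) B)
  have hper : ∀ a b : ℤ, (φ ^ a) B = (φ ^ b) B → (φ ^ (b - a)) B = B := by
    intro a b hE
    have h2 : (φ ^ (-a)) ((φ ^ a) B) = B := by
      rw [← Equiv.Perm.mul_apply, ← zpow_add, neg_add_cancel, zpow_zero]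
      rfl
    have h3 : (φ ^ (-a)) ((φ ^ b) B) = (φ ^ (b - a)) B := by
      rw [← Equiv.Perm.mul_apply, ← zpow_add, show -a + b = b - a by ring]
    rw [← h3, ← hE]
    exact h2
  obtain ⟨s, hs_pos, hsB⟩ : ∃ s : ℤ, 0 < s ∧ (φ ^ s) B = B := by
    rcases lt_or_gt_of_ne hab with h | h
    · exact ⟨b - a, by omega, hper a b he⟩
    · exact ⟨a - b, by omega, hper b a he.symm⟩
  have hYper : ∀ i, Y (i + s) = Y i := by
    intro i
    show (φ ^ (i+s)) B ⟨0, by omega⟩ = (φ ^ i) B ⟨0, by omega⟩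
    rw [zpow_add, Equiv.Perm.mul_apply, hsB]
  have hYmul : ∀ (m : ℕ) (i : ℤ), Y (i + m * s) = Y i := by
    intro m
    induction m with
    | zero => intro i; simp
    | succ m ih =>
      intro i
      have : i + ((m:ℤ)+1) * s = (i + s) + m * s := by ring
      rw [show ((m+1:ℕ):ℤ) = (m:ℤ)+1 by push_cast; ring, this, ih (i+s), hYper i]
  set p := s.toNat with hp
  have hps : (p : ℤ) = s := Int.toNat_of_nonneg hs_pos.le
  have hppos : 0 < p := by omega
  have hfix : (eca N)^[p] Y = Y := by
    rw [hiterY p]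
    funext i
    show Y (i + -((p:ℤ)*t)) = Y i
    have h1 := hYmul t (i + -((p:ℤ)*t))
    rw [← h1]
    congr 1
    rw [hps]
    ring
  refine ⟨shiftBy ((k:ℤ)+1) Y, ⟨p, hppos, ?_⟩, ?_⟩
  · rw [iter_shift, hfix]
  · apply lt_of_le_of_lt _ hk
    apply dC_le_of_agree k
    intro i hi
    show x i = Y (i + ((k:ℤ)+1))
    have hj : ∃ jv : ℕ, (jv:ℤ) = i + ((k:ℤ)+1) ∧ jv ≤ t := by
      refine ⟨(i + ((k:ℤ)+1)).toNat, by omega, by omega⟩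
    obtain ⟨jv, hjv, hjt⟩ := hj
    have h0 := hcoord jv hjt 0
    have hzero : (φ ^ (0:ℤ)) B = B := by simp
    rw [hzero] at h0
    have hBj : B ⟨jv, by omega⟩ = x i := by
      show x ((jv:ℤ) - ((k:ℤ)+1)) = x i
      congr 1
      omega
    rw [show (0:ℤ) + (jv:ℤ) = (jv:ℤ) by ring] at h0
    rw [← hjv]
    exact hBj.symm.trans h0


section Left

variable {N : ℕ}

lemma iter_flip_left (hinj : ∀ a a' b c, localRule N a b c = localRule N a' b c → a = a') :
    ∀ (n : ℕ) (x y : ℤ → Bool) (j : ℤ),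
    (∀ i, j - n < i → x i = y i) → x (j - n) ≠ y (j - n) →
    (eca N)^[n] x j ≠ (eca N)^[n] y j := by
  intro n
  induction n with
  | zero =>
    intro x y j h hne
    simpa using hne
  | succ n ih =>
    intro x y j h hne
    rw [Function.iterate_succ_apply, Function.iterate_succ_apply]
    apply ih
    · intro i hi
      have h1 := h (i-1) (by push_cast at hi ⊢; omega)
      have h2 := h i (by push_cast at hi ⊢; omega)
      have h3 := h (i+1) (by push_cast at hi ⊢; omega)
      simp [eca, h1, h2, h3]
    · show eca N x (j - n) ≠ eca N y (j - n)
      have h2 := h (j - n) (by push_cast; omega)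
      have h3 := h (j - n + 1) (by push_cast; omega)
      have hne' : x (j - n - 1) ≠ y (j - n - 1) := by
        have : j - ((n : ℤ) + 1) = j - n - 1 := by ring
        rw [← this]
        push_cast at hne
        convert hne using 3 <;> omega
      simp only [eca, h2, h3]
      intro hcontra
      exact hne' (hinj _ _ _ _ hcontra)

lemma iter_solve_left (hsurj : ∀ b c d, ∃ a, localRule N a b c = d) :
    ∀ (n : ℕ) (z : ℤ → Bool) (j : ℤ) (b : Bool),
    ∃ c, (eca N)^[n] (Function.update z (j - n) c) j = b := by
  intro n
  induction n with
  | zero =>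
    intro z j b
    refine ⟨b, ?_⟩
    simp
  | succ n ih =>
    intro z j b
    obtain ⟨c', hc'⟩ := ih (eca N z) j b
    obtain ⟨c, hc⟩ := hsurj (z (j - n)) (z (j - n + 1)) c'
    refine ⟨c, ?_⟩
    rw [Function.iterate_succ_apply]
    have hcast : (((n:ℕ)+1 : ℕ) : ℤ) = (n:ℤ) + 1 := by push_cast; ring
    have hagree : ∀ i, j - (n:ℤ) ≤ i → i ≤ j + (n:ℤ) →
        eca N (Function.update z (j - ((n:ℕ)+1 : ℕ)) c) i
          = Function.update (eca N z) (j - n) c' i := by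
      intro i hi1 hi2
      by_cases hij : i = j - n
      · subst hij
        rw [Function.update_self]
        show localRule N (Function.update z (j - ((n:ℕ)+1 : ℕ)) c (j - n - 1))
          (Function.update z (j - ((n:ℕ)+1 : ℕ)) c (j - n))
          (Function.update z (j - ((n:ℕ)+1 : ℕ)) c (j - n + 1)) = c'
        have hpos : j - (n:ℤ) - 1 = j - ((n:ℕ)+1 : ℕ) := by rw [hcast]; ring
        rw [hpos, Function.update_self,
            Function.update_of_ne (by rw [hcast]; omega),
            Function.update_of_ne (by rw [hcast]; omega)]
        exact hc
      · rw [Function.update_of_ne hij]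
        show localRule N (Function.update z (j - ((n:ℕ)+1 : ℕ)) c (i - 1))
          (Function.update z (j - ((n:ℕ)+1 : ℕ)) c i)
          (Function.update z (j - ((n:ℕ)+1 : ℕ)) c (i + 1)) = eca N z i
        rw [Function.update_of_ne (by rw [hcast]; omega),
            Function.update_of_ne (by rw [hcast]; omega),
            Function.update_of_ne (by rw [hcast]; omega)]
        rfl
    rw [iter_agree N n _ _ j hagree]
    exact hc'

lemma build_left (hsurj : ∀ b c d, ∃ a, localRule N a b c = d)
    (n : ℕ) (y : ℤ → Bool) :
    ∀ (m : ℕ) (z : ℤ → Bool) (j₀ : ℤ),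
    ∃ z', (∀ i, j₀ - n < i → z' i = z i) ∧
      (∀ j, j₀ - m < j → j ≤ j₀ → (eca N)^[n] z' j = y j) := by
  intro m
  induction m with
  | zero =>
    intro z j₀
    exact ⟨z, fun _ _ => rfl, fun j h1 h2 => by push_cast at h1; omega⟩
  | succ m ih =>
    intro z j₀
    obtain ⟨z'', h1, h2⟩ := ih z j₀
    obtain ⟨c, hc⟩ := iter_solve_left hsurj n z'' (j₀ - m) (y (j₀ - m))
    refine ⟨Function.update z'' (j₀ - (m:ℤ) - n) c, ?_, ?_⟩
    · intro i hi
      rw [Function.update_of_ne (by omega)]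
      exact h1 i hi
    · intro j hj1 hj2
      by_cases hj : j = j₀ - m
      · subst hj
        exact hc
      · have hj1' : j₀ - m < j := by push_cast at hj1; omega
        rw [iter_agree N n _ z'' j (fun i hi1 hi2 => Function.update_of_ne (by omega) _ _)]
        exact h2 j hj1' hj2

lemma sens_left (hinj : ∀ a a' b c, localRule N a b c = localRule N a' b c → a = a') :
    SensitiveCA (eca N) := by
  refine ⟨1, one_pos, ?_⟩
  intro x δ hδ
  obtain ⟨m, hm⟩ := exists_pow_lt_of_lt_one hδ (show (1:ℝ)/2 < 1 by norm_num)
  set y := Function.update x (-(m : ℤ)) (!(x (-(m : ℤ)))) with hy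
  have hdxy : dC x y < δ := by
    have := dC_update_le x (-(m : ℤ)) (!(x (-(m : ℤ))))
    simp only [Int.natAbs_neg, Int.natAbs_natCast] at this
    exact lt_of_le_of_lt this hm
  refine ⟨y, hdxy, m, ?_⟩
  have hne : (eca N)^[m] x 0 ≠ (eca N)^[m] y 0 := by
    apply iter_flip_left hinj m x y 0
    · intro i hi
      rw [hy, Function.update_of_ne (by omega)]
    · rw [hy]
      have h0 : (0:ℤ) - (m:ℤ) = -(m:ℤ) := by ring
      rw [h0, Function.update_self]
      simp
  have := single_le_dC 0 hne
  simpa using this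

lemma trans_left (hsurj : ∀ b c d, ∃ a, localRule N a b c = d) :
    TransitiveCA (eca N) := by
  rintro U V hU hV ⟨x, hxU⟩ ⟨y, hyV⟩
  obtain ⟨δ₁, hδ₁, hU'⟩ := hU x hxU
  obtain ⟨δ₂, hδ₂, hV'⟩ := hV y hyV
  obtain ⟨k, hk⟩ := exists_small (min δ₁ δ₂) (lt_min hδ₁ hδ₂)
  set n := 2*k + 1 with hn
  obtain ⟨z, hz1, hz2⟩ := build_left hsurj n y (2*k+1) x ((k:ℤ))
  have hzU : z ∈ U := by
    apply hU'
    apply lt_of_le_of_lt _ (lt_of_lt_of_le hk (min_le_left _ _))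
    apply dC_le_of_agree k
    intro i hi
    exact (hz1 i (by push_cast; omega)).symm
  have hzV : (eca N)^[n] z ∈ V := by
    apply hV'
    apply lt_of_le_of_lt _ (lt_of_lt_of_le hk (min_le_right _ _))
    apply dC_le_of_agree k
    intro i hi
    exact (hz2 i (by push_cast; omega) (by push_cast; omega)).symm
  exact ⟨n, by omega, ⟨(eca N)^[n] z, ⟨z, hzU, rfl⟩, hzV⟩⟩

lemma dpo_left (hsurj : ∀ b c d, ∃ a, localRule N a b c = d)
    (x : ℤ → Bool) (δ : ℝ) (hδ : 0 < δ) :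
    ∃ y : ℤ → Bool, (∃ p : ℕ, 0 < p ∧ (eca N)^[p] y = y) ∧ dC x y < δ := by
  classical
  obtain ⟨k, hk⟩ := exists_small δ hδ
  set t := 2*k + 2 with ht
  choose csolve hcsolve using hsurj
  set Φ : (Fin (t+1) → Bool) → (Fin (t+1) → Bool) := fun C j =>
    if h : 1 ≤ (j : ℕ) then C ⟨(j:ℕ)-1, by omega⟩
    else csolve (C ⟨0, by omega⟩) (C ⟨1, by omega⟩) (C ⟨t, by omega⟩) with hΦ
  have hΦtail : ∀ C (jv : ℕ) (hj : jv < t),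
      Φ C ⟨jv + 1, by omega⟩ = C ⟨jv, by omega⟩ := by
    intro C jv hj
    have h1 : 1 ≤ jv + 1 := by omega
    simp only [hΦ, dif_pos h1, Nat.add_sub_cancel]
  have hΦrule : ∀ C, localRule N (Φ C ⟨0, by omega⟩) (C ⟨0, by omega⟩)
      (C ⟨1, by omega⟩) = C ⟨t, by omega⟩ := by
    intro C
    have : Φ C ⟨0, by omega⟩
        = csolve (C ⟨0, by omega⟩) (C ⟨1, by omega⟩) (C ⟨t, by omega⟩) := by
      simp only [hΦ]
      norm_num
    rw [this]
    exact hcsolve _ _ _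
  have hΦinj : Function.Injective Φ := by
    intro C C' hCC
    have htail : ∀ (jv : ℕ) (hjle : jv < t), C ⟨jv, by omega⟩ = C' ⟨jv, by omega⟩ := by
      intro jv hj
      have := congrFun hCC ⟨jv + 1, by omega⟩
      rw [hΦtail C jv hj, hΦtail C' jv hj] at this
      exact this
    have hhead : C ⟨t, by omega⟩ = C' ⟨t, by omega⟩ := by
      have h1 := hΦrule C
      have h2 := hΦrule C'
      rw [htail 0 (by omega), htail 1 (by omega), congrFun hCC ⟨0, by omega⟩] at h1
      exact h1.symm.trans h2
    funext j
    rcases j with ⟨jv, hj⟩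
    rcases Nat.lt_or_ge jv t with hlt | hge
    · exact htail jv hlt
    · have : jv = t := by omega
      subst this
      exact hhead
  have hΦbij : Function.Bijective Φ := Finite.injective_iff_bijective.mp hΦinj
  set φ : Equiv.Perm (Fin (t+1) → Bool) := Equiv.ofBijective Φ hΦbij with hφ
  have hφapp : ∀ C, φ C = Φ C := fun C => rfl
  set B : Fin (t+1) → Bool := fun j => x ((j:ℤ) - ((k:ℤ)+1)) with hB
  set Y : ℤ → Bool := fun i => (φ ^ (-i)) B ⟨0, by omega⟩ with hY
  have hstep : ∀ z : ℤ, (φ ^ (z+1)) B = Φ ((φ ^ z) B) := by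
    intro z
    have : φ ^ (z + 1) = φ * φ ^ z := by
      rw [show z + 1 = 1 + z by ring, zpow_add, zpow_one]
    rw [this, Equiv.Perm.mul_apply, hφapp]
  have hcoord : ∀ (jv : ℕ) (hj : jv ≤ t) (i : ℤ),
      (φ ^ (-i)) B ⟨jv, by omega⟩ = Y (i + jv) := by
    intro jv
    induction jv with
    | zero =>
      intro _ i
      simp only [hY, Nat.cast_zero, add_zero]
    | succ jv ih =>
      intro hj i
      have h1 : (φ ^ (-i)) B ⟨jv + 1, by omega⟩ = (φ ^ (-(i+1))) B ⟨jv, by omega⟩ := by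
        have hz : -i = -(i+1) + 1 := by ring
        rw [hz, hstep (-(i+1))]
        exact hΦtail ((φ ^ (-(i+1))) B) jv (by omega)
      rw [h1, ih (by omega) (i+1)]
      congr 1
      push_cast
      ring
  have heq : ∀ m : ℤ, eca N Y m = Y (m + t) := by
    intro m
    have hr := hΦrule ((φ ^ (-m)) B)
    have hΦm : Φ ((φ ^ (-m)) B) = (φ ^ (-(m-1))) B := by
      rw [← hstep (-m)]
      congr 1
      ring
    rw [hΦm] at hr
    rw [hcoord 0 (by omega) (m-1), hcoord 0 (by omega) m, hcoord 1 (by omega) m,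
        hcoord t (by omega) m] at hr
    have e0 : m - 1 + ((0:ℕ):ℤ) = m - 1 := by push_cast; ring
    have e1 : m + ((0:ℕ):ℤ) = m := by push_cast; ring
    have e2 : m + ((1:ℕ):ℤ) = m + 1 := by push_cast; ring
    rw [e0, e1, e2] at hr
    show localRule N (Y (m-1)) (Y m) (Y (m+1)) = Y (m + t)
    exact hr
  have hecaY : eca N Y = shiftBy ((t:ℤ)) Y := by
    funext m
    rw [heq m]
    rfl
  have hiterY : ∀ n : ℕ, (eca N)^[n] Y = shiftBy ((n:ℤ)*t) Y := by
    intro n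
    induction n with
    | zero =>
      funext i
      simp [shiftBy]
    | succ n ih =>
      rw [Function.iterate_succ_apply, hecaY, iter_shift, ih]
      funext i
      simp only [shiftBy]
      congr 1
      push_cast
      ring
  obtain ⟨a, b, hab, he⟩ := Finite.exists_ne_map_eq_of_infinite (fun i : ℤ => (φ ^ i) B)
  have hper : ∀ a b : ℤ, (φ ^ a) B = (φ ^ b) B → (φ ^ (b - a)) B = B := by
    intro a b hE
    have h2 : (φ ^ (-a)) ((φ ^ a) B) = B := by
      rw [← Equiv.Perm.mul_apply, ← zpow_add, neg_add_cancel, zpow_zero]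
      rfl
    have h3 : (φ ^ (-a)) ((φ ^ b) B) = (φ ^ (b - a)) B := by
      rw [← Equiv.Perm.mul_apply, ← zpow_add, show -a + b = b - a by ring]
    rw [← h3, ← hE]
    exact h2
  obtain ⟨s, hs_pos, hsB⟩ : ∃ s : ℤ, 0 < s ∧ (φ ^ s) B = B := by
    rcases lt_or_gt_of_ne hab with h | h
    · exact ⟨b - a, by omega, hper a b he⟩
    · exact ⟨a - b, by omega, hper b a he.symm⟩
  have hsB' : (φ ^ (-s)) B = B := by
    have := hper s 0 (by rw [hsB, zpow_zero]; rfl)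
    rwa [show (0:ℤ) - s = -s by ring] at this
  have hYper : ∀ i, Y (i + s) = Y i := by
    intro i
    show (φ ^ (-(i+s))) B ⟨0, by omega⟩ = (φ ^ (-i)) B ⟨0, by omega⟩
    rw [show -(i+s) = -i + -s by ring, zpow_add, Equiv.Perm.mul_apply, hsB']
  have hYmul : ∀ (m : ℕ) (i : ℤ), Y (i + m * s) = Y i := by
    intro m
    induction m with
    | zero => intro i; simp
    | succ m ih =>
      intro i
      have h4 : i + ((m:ℤ)+1) * s = (i + s) + m * s := by ring
      rw [show ((m+1:ℕ):ℤ) = (m:ℤ)+1 by push_cast; ring, h4, ih (i+s), hYper i]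
  set p := s.toNat with hp
  have hps : (p : ℤ) = s := Int.toNat_of_nonneg hs_pos.le
  have hppos : 0 < p := by omega
  have hfix : (eca N)^[p] Y = Y := by
    rw [hiterY p]
    funext i
    show Y (i + ((p:ℤ)*t)) = Y i
    have h1 := hYmul t i
    rw [← h1]
    congr 1
    rw [hps]
    ring
  refine ⟨shiftBy ((k:ℤ)+1) Y, ⟨p, hppos, ?_⟩, ?_⟩
  · rw [iter_shift, hfix]
  · apply lt_of_le_of_lt _ hk
    apply dC_le_of_agree k
    intro i hi
    show x i = Y (i + ((k:ℤ)+1))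
    have hj : ∃ jv : ℕ, (jv:ℤ) = i + ((k:ℤ)+1) ∧ jv ≤ t := by
      refine ⟨(i + ((k:ℤ)+1)).toNat, by omega, by omega⟩
    obtain ⟨jv, hjv, hjt⟩ := hj
    have h0 := hcoord jv hjt 0
    have hzero : (φ ^ (-(0:ℤ))) B = B := by simp
    rw [hzero] at h0
    have hBj : B ⟨jv, by omega⟩ = x i := by
      show x ((jv:ℤ) - ((k:ℤ)+1)) = x i
      congr 1
      omega
    rw [show (0:ℤ) + (jv:ℤ) = (jv:ℤ) by ring] at h0
    rw [← hjv]
    exact hBj.symm.trans h0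

end Left


end CAwork

/-- The listed ECA rules are chaotic in the sense of Devaney: sensitive, topologically
transitive, and with a dense set of periodic points. -/
theorem eca_devaney_chaotic_rules :
    ∀ N ∈ ({15, 30, 45, 60, 90, 105, 106, 150, 154, 170} : Finset ℕ),
      SensitiveCA (eca N) ∧ TransitiveCA (eca N) ∧
        ∀ x : ℤ → Bool, ∀ δ : ℝ, 0 < δ →
          ∃ y : ℤ → Bool, (∃ p : ℕ, 0 < p ∧ (eca N)^[p] y = y) ∧ dC x y < δ := by
  intro N hN
  fin_cases hN
  -- 15
  · exact ⟨CAwork.sens_left (by decide), CAwork.trans_left (by decide),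
      fun x δ hδ => CAwork.dpo_left (by decide) x δ hδ⟩
  -- 30
  · exact ⟨CAwork.sens_left (by decide), CAwork.trans_left (by decide),
      fun x δ hδ => CAwork.dpo_left (by decide) x δ hδ⟩
  -- 45
  · exact ⟨CAwork.sens_left (by decide), CAwork.trans_left (by decide),
      fun x δ hδ => CAwork.dpo_left (by decide) x δ hδ⟩
  -- 60
  · exact ⟨CAwork.sens_left (by decide), CAwork.trans_left (by decide),
      fun x δ hδ => CAwork.dpo_left (by decide) x δ hδ⟩
  -- 90
  · exact ⟨CAwork.sens_right (by decide), CAwork.trans_right (by decide),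
      fun x δ hδ => CAwork.dpo_right (by decide) x δ hδ⟩
  -- 105
  · exact ⟨CAwork.sens_right (by decide), CAwork.trans_right (by decide),
      fun x δ hδ => CAwork.dpo_right (by decide) x δ hδ⟩
  -- 106
  · exact ⟨CAwork.sens_right (by decide), CAwork.trans_right (by decide),
      fun x δ hδ => CAwork.dpo_right (by decide) x δ hδ⟩
  -- 150
  · exact ⟨CAwork.sens_right (by decide), CAwork.trans_right (by decide),
      fun x δ hδ => CAwork.dpo_right (by decide) x δ hδ⟩
  -- 154
  · exact ⟨CAwork.sens_right (by decide), CAwork.trans_right (by decide),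
      fun x δ hδ => CAwork.dpo_right (by decide) x δ hδ⟩
  -- 170
  · exact ⟨CAwork.sens_right (by decide), CAwork.trans_right (by decide),
      fun x δ hδ => CAwork.dpo_right (by decide) x δ hδ⟩
end

section
/- The elementary cellular automaton F_184 is not surjective; more precisely, every configuration x ∈ X that contains the pattern 1100 (i.e. x_i = 1, x_{i+1} = 1, x_{i+2} = 0, x_{i+3} = 0 for some i ∈ ℤ) has no preimage under F_184. -/
lemma key184 : ∀ a b c d e g : Bool,
    ¬(localRule 184 a b c = true ∧ localRule 184 b c d = true ∧
      localRule 184 c d e = false ∧ localRule 184 d e g = false) := by decide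

lemma noPreimage184 : ∀ x : ℤ → Bool,
    (∃ i : ℤ, x i = true ∧ x (i + 1) = true ∧ x (i + 2) = false ∧ x (i + 3) = false) →
    ¬ ∃ y : ℤ → Bool, eca 184 y = x := by
  rintro x ⟨i, h0, h1, h2, h3⟩ ⟨y, hy⟩
  apply key184 (y (i-1)) (y i) (y (i+1)) (y (i+2)) (y (i+3)) (y (i+4))
  have e1 : i + 1 - 1 = i := by ring
  have e2 : i + 1 + 1 = i + 2 := by ring
  have e3 : i + 2 - 1 = i + 1 := by ring
  have e4 : i + 2 + 1 = i + 3 := by ring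
  have e5 : i + 3 - 1 = i + 2 := by ring
  have e6 : i + 3 + 1 = i + 4 := by ring
  refine ⟨?_, ?_, ?_, ?_⟩
  · have := congrFun hy i; rw [h0] at this; simpa [eca] using this
  · have := congrFun hy (i+1); rw [h1] at this; simpa [eca, e1, e2] using this
  · have := congrFun hy (i+2); rw [h2] at this; simpa [eca, e3, e4] using this
  · have := congrFun hy (i+3); rw [h3] at this; simpa [eca, e5, e6] using this

/-- ECA rule 184 is not surjective; more precisely, every configuration containing the
pattern `1100` has no preimage under `F_184`. -/
theorem eca184_not_surjective :
    ¬ Function.Surjective (eca 184) ∧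
      ∀ x : ℤ → Bool,
        (∃ i : ℤ, x i = true ∧ x (i + 1) = true ∧ x (i + 2) = false ∧ x (i + 3) = false) →
        ¬ ∃ y : ℤ → Bool, eca 184 y = x := by
  constructor
  · intro hs
    apply noPreimage184 (fun j => decide (j < 2)) ⟨0, by norm_num, by norm_num, by norm_num, by norm_num⟩
    obtain ⟨y, hy⟩ := hs (fun j => decide (j < 2))
    exact ⟨y, hy⟩
  · exact noPreimage184
end
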